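/- arXiv:1705.00849 — 9 statements merged into one kernel-verified Lean document; each statement's English description precedes it below -/
import Mathlib

section
/- Let D : (1/2, 1] → ℝ be the piecewise function D(x) = 1 − 1/x for x ∈ (1/2, 0.5511] ∪ (0.888, 1]; D(x) = 25/6 − 2√2 − 19/(12x) + 7/(32x²) for x ∈ (0.5511, (1+√2)/4]; D(x) = 13/3 − 2√2 − (9+√2)/(6x) + 1/(4x²) for x ∈ ((1+√2)/4, (2+√2)/4]; D(x) = 14/3 − 2√2 − 13/(6x) + 3/(8x²) for x ∈ ((2+√2)/4, 0.888]. Then for every p ∈ (1/2, 1], −log₂ p + (1/p)·(−1 + ∫_{1/2}^{1} D(x) dx + ∫_{1/2}^{p} D(x) dx) ≤ −1.40118. -/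
/-!
Write `g p` for `p` times the left-hand side plus `1.40118 * p`, so that the claim is `g ≤ 0` on
`(1/2, 1]`. On a piece where `D = A - B / x + C / x ^ 2`, `g` agrees up to an additive constant
with `-p log₂ p + 1.40118 p + (A p - B log p - C / p)`, whose second derivative has the sign of
`B p - 2 C - p ^ 2 / log 2`. On the first piece `g` is convex, so it is bounded by its values at
the ends. On the three middle pieces `g'` is a concave function of `1 / p`, hence nonnegative as
soon as it is at both ends of the piece; so `g` increases from `0.5511` to `0.888`. On the last
piece `g` is concave and lies below its tangent at `0.8983`, where `g` is within `4·10⁻⁷` of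
`0`. What remains are finitely many numerical inequalities between logarithms, square roots and
rationals, settled by Taylor bounds for `exp`.
-/

open Real Set MeasureTheory intervalIntegral

noncomputable section

def ratFn (A B C x : ℝ) : ℝ := A - B / x + C / x ^ 2

def ratPrimitive (A B C x : ℝ) : ℝ := A * x - B * log x - C / x

section RationalPieces

variable {A B C lo hi : ℝ}

lemma hasDerivAt_ratPrimitive {x : ℝ} (hx : x ≠ 0) :
    HasDerivAt (ratPrimitive A B C) (ratFn A B C x) x := by
  have h := (((hasDerivAt_id x).const_mul A).sub ((hasDerivAt_log hx).const_mul B)).sub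
    ((hasDerivAt_inv hx).const_mul C)
  have hfun : ratPrimitive A B C =
      ((fun y => A * id y) - fun y => B * log y) - fun y => C * y⁻¹ := by
    funext y; simp only [ratPrimitive, Pi.sub_apply, id, div_eq_mul_inv]
  rw [hfun]
  refine h.congr_deriv ?_
  simp only [ratFn]
  field_simp
  ring

lemma continuousOn_ratFn (hlo : 0 < lo) : ContinuousOn (ratFn A B C) (Icc lo hi) := by
  have : ∀ x ∈ Icc lo hi, x ≠ 0 := fun x hx => (hlo.trans_le hx.1).ne'
  unfold ratFn
  fun_prop (disch := simp_all)

lemma intervalIntegrable_of_eqOn_ratFn {f : ℝ → ℝ} (hlo : 0 < lo) (hle : lo ≤ hi)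
    (hf : EqOn f (ratFn A B C) (Ioc lo hi)) : IntervalIntegrable f volume lo hi := by
  rw [intervalIntegrable_iff_integrableOn_Ioc_of_le hle]
  exact (integrableOn_congr_fun hf measurableSet_Ioc).mpr
    ((continuousOn_ratFn hlo).integrableOn_Icc.mono_set Ioc_subset_Icc_self)

lemma integral_eq_ratPrimitive_sub {f : ℝ → ℝ} (hlo : 0 < lo) (hle : lo ≤ hi)
    (hf : EqOn f (ratFn A B C) (Ioc lo hi)) :
    ∫ x in lo..hi, f x = ratPrimitive A B C hi - ratPrimitive A B C lo := by
  rw [integral_congr_Ioo_of_le hle (hf.mono Ioo_subset_Ioc_self)]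
  refine integral_eq_sub_of_hasDerivAt (fun x hx => hasDerivAt_ratPrimitive ?_)
    ((continuousOn_ratFn hlo).intervalIntegrable_of_Icc hle)
  rw [uIcc_of_le hle] at hx
  exact (hlo.trans_le hx.1).ne'

end RationalPieces

def gapShape (k A B C p : ℝ) : ℝ := -(p * logb 2 p) + k * p + ratPrimitive A B C p

def gapShapeDeriv (k A B C p : ℝ) : ℝ := -logb 2 p - 1 / log 2 + k + ratFn A B C p

section GapShape

variable {k A B C lo hi : ℝ}

lemma hasDerivAt_gapShape {p : ℝ} (hp : p ≠ 0) :
    HasDerivAt (gapShape k A B C) (gapShapeDeriv k A B C p) p := by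
  have hlogb : HasDerivAt (fun y => y * logb 2 y) (logb 2 p + 1 / log 2) p := by
    have h := (hasDerivAt_id p).mul ((hasDerivAt_log hp).div_const (log 2))
    refine h.congr_deriv ?_
    simp only [id, logb]
    field_simp
  exact ((hlogb.neg.add ((hasDerivAt_id p).const_mul k)).add
    (hasDerivAt_ratPrimitive hp)).congr_deriv (by simp only [gapShapeDeriv]; ring)

lemma hasDerivAt_gapShapeDeriv {p : ℝ} (hp : p ≠ 0) :
    HasDerivAt (gapShapeDeriv k A B C) ((B * p - 2 * C - p ^ 2 / log 2) / p ^ 3) p := by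
  have h := (((((hasDerivAt_log hp).div_const (log 2)).neg.sub_const (1 / log 2)).add_const
    k).add ((hasDerivAt_const p A).sub ((hasDerivAt_inv hp).const_mul B))).add
    (((hasDerivAt_inv hp).pow 2).const_mul C)
  have hfun : gapShapeDeriv k A B C =
      (fun y => -(log y / log 2) - 1 / log 2 + k) + ((fun _ => A) - fun y => B * y⁻¹) +
        fun y => C * y⁻¹ ^ 2 := by
    funext y; simp only [gapShapeDeriv, ratFn, logb, Pi.add_apply, Pi.sub_apply]; ring
  rw [hfun]
  refine h.congr_deriv ?_
  simp only [Nat.cast_ofNat, Nat.add_one_sub_one, pow_one]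
  field_simp
  ring

lemma convexOn_gapShape (hlo : 0 < lo)
    (h : ∀ x ∈ Ioo lo hi, x ^ 2 ≤ (B * x - 2 * C) * log 2) :
    ConvexOn ℝ (Icc lo hi) (gapShape k A B C) := by
  have hne : ∀ x ∈ Icc lo hi, x ≠ 0 := fun x hx => (hlo.trans_le hx.1).ne'
  refine convexOn_of_hasDerivWithinAt2_nonneg (convex_Icc lo hi)
    (fun x hx => (hasDerivAt_gapShape (hne x hx)).continuousAt.continuousWithinAt)
    (fun x hx => (hasDerivAt_gapShape (hne x (interior_subset hx))).hasDerivWithinAt)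
    (fun x hx => (hasDerivAt_gapShapeDeriv (hne x (interior_subset hx))).hasDerivWithinAt)
    fun x hx => ?_
  rw [interior_Icc] at hx
  have : x ^ 2 / log 2 ≤ B * x - 2 * C := by rw [div_le_iff₀ (log_pos one_lt_two)]; exact h x hx
  exact div_nonneg (by linarith) (pow_nonneg (hlo.trans hx.1).le 3)

lemma concaveOn_gapShape (hlo : 0 < lo)
    (h : ∀ x ∈ Ioo lo hi, (B * x - 2 * C) * log 2 ≤ x ^ 2) :
    ConcaveOn ℝ (Icc lo hi) (gapShape k A B C) := by
  have hne : ∀ x ∈ Icc lo hi, x ≠ 0 := fun x hx => (hlo.trans_le hx.1).ne'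
  refine concaveOn_of_hasDerivWithinAt2_nonpos (convex_Icc lo hi)
    (fun x hx => (hasDerivAt_gapShape (hne x hx)).continuousAt.continuousWithinAt)
    (fun x hx => (hasDerivAt_gapShape (hne x (interior_subset hx))).hasDerivWithinAt)
    (fun x hx => (hasDerivAt_gapShapeDeriv (hne x (interior_subset hx))).hasDerivWithinAt)
    fun x hx => ?_
  rw [interior_Icc] at hx
  have : B * x - 2 * C ≤ x ^ 2 / log 2 := by rw [le_div_iff₀ (log_pos one_lt_two)]; exact h x hx
  exact div_nonpos_of_nonpos_of_nonneg (by linarith) (pow_nonneg (hlo.trans hx.1).le 3)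

lemma gapShapeDeriv_inv (u : ℝ) :
    gapShapeDeriv k A B C u⁻¹ = logb 2 u - 1 / log 2 + k + A - B * u + C * u ^ 2 := by
  simp only [gapShapeDeriv, ratFn, logb_inv, div_inv_eq_mul, inv_pow]
  ring

lemma concaveOn_gapShapeDeriv_inv (hlo : 0 < lo) (hle : lo ≤ hi)
    (hC : 2 * C * log 2 ≤ lo ^ 2) :
    ConcaveOn ℝ (Icc hi⁻¹ lo⁻¹) (fun u => gapShapeDeriv k A B C u⁻¹) := by
  have hpos : ∀ u ∈ Icc hi⁻¹ lo⁻¹, 0 < u := fun u hu =>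
    (inv_pos.mpr (hlo.trans_le hle)).trans_le hu.1
  simp only [gapShapeDeriv_inv]
  refine concaveOn_of_hasDerivWithinAt2_nonpos (f' := fun u => u⁻¹ / log 2 - B + 2 * C * u)
    (f'' := fun u => -(u ^ 2)⁻¹ / log 2 + 2 * C) (convex_Icc _ _) ?_ ?_ ?_ ?_
  all_goals try rw [interior_Icc]
  · intro u hu
    have hu0 := (hpos u hu).ne'
    apply ContinuousAt.continuousWithinAt
    fun_prop (disch := assumption)
  · intro u hu
    have hu0 := hpos u (Ioo_subset_Icc_self hu)
    have h := (((((((hasDerivAt_log hu0.ne').div_const (log 2)).sub_const (1 / log 2)).add_const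
      k).add_const A).sub ((hasDerivAt_id u).const_mul B)).add
      (((hasDerivAt_id u).pow 2).const_mul C))
    refine (h.congr_deriv ?_).hasDerivWithinAt
    simp only [id]
    ring
  · intro u hu
    have hu0 := hpos u (Ioo_subset_Icc_self hu)
    have h := (((hasDerivAt_inv hu0.ne').div_const (log 2)).sub_const B).add
      ((hasDerivAt_id u).const_mul (2 * C))
    refine (h.congr_deriv ?_).hasDerivWithinAt
    ring
  · intro u hu
    have hu0 := hpos u (Ioo_subset_Icc_self hu)
    have hlu : lo * u < 1 := by
      simpa [mul_inv_cancel₀ hlo.ne', mul_comm] using mul_lt_mul_of_pos_left hu.2 hlo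
    have hL := log_pos one_lt_two
    have key : 2 * C * log 2 * u ^ 2 ≤ 1 := by
      nlinarith [mul_le_mul_of_nonneg_right hC (sq_nonneg u), mul_pos hlo hu0]
    rw [neg_div, neg_add_nonpos_iff, le_div_iff₀ hL, ← one_div, le_div_iff₀ (by positivity)]
    linarith

lemma gapShapeDeriv_nonneg (hlo : 0 < lo) (hC : 2 * C * log 2 ≤ lo ^ 2)
    (h_lo : 0 ≤ gapShapeDeriv k A B C lo) (h_hi : 0 ≤ gapShapeDeriv k A B C hi) {x : ℝ}
    (hx : x ∈ Icc lo hi) : 0 ≤ gapShapeDeriv k A B C x := by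
  have hle := hx.1.trans hx.2
  have hx0 : 0 < x := hlo.trans_le hx.1
  have hmin :=
    (concaveOn_gapShapeDeriv_inv (k := k) (A := A) (B := B) hlo hle hC).min_le_of_mem_Icc
      ⟨le_rfl, inv_anti₀ hlo hle⟩ ⟨inv_anti₀ hlo hle, le_rfl⟩
    ⟨inv_anti₀ hx0 hx.2, inv_anti₀ hlo hx.1⟩
  simp only [inv_inv] at hmin
  exact (le_min h_hi h_lo).trans hmin

lemma monotoneOn_gapShape (hlo : 0 < lo) (hC : 2 * C * log 2 ≤ lo ^ 2)
    (h_lo : 0 ≤ gapShapeDeriv k A B C lo) (h_hi : 0 ≤ gapShapeDeriv k A B C hi) :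
    MonotoneOn (gapShape k A B C) (Icc lo hi) := by
  have hne : ∀ x ∈ Icc lo hi, x ≠ 0 := fun x hx => (hlo.trans_le hx.1).ne'
  refine monotoneOn_of_hasDerivWithinAt_nonneg (convex_Icc lo hi)
    (fun x hx => (hasDerivAt_gapShape (hne x hx)).continuousAt.continuousWithinAt)
    (fun x hx => (hasDerivAt_gapShape (hne x (interior_subset hx))).hasDerivWithinAt)
    (fun x hx => gapShapeDeriv_nonneg hlo hC h_lo h_hi (interior_subset hx))

end GapShape

lemma ConcaveOn.le_add_mul_sub_of_hasDerivAt {S : Set ℝ} {f : ℝ → ℝ} {f' x y : ℝ}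
    (hf : ConcaveOn ℝ S f) (hx : x ∈ S) (hy : y ∈ S) (hf' : HasDerivAt f f' x) :
    f y ≤ f x + f' * (y - x) := by
  rcases lt_trichotomy y x with hyx | rfl | hxy
  · have h := hf.le_slope_of_hasDerivAt hy hx hyx hf'
    rw [slope_def_field, le_div_iff₀ (sub_pos.mpr hyx)] at h
    linarith
  · simp
  · have h := hf.slope_le_of_hasDerivAt hx hy hxy hf'
    rw [slope_def_field, div_le_iff₀ (sub_pos.mpr hxy)] at h
    linarith

def IsGapShapeOn (g : ℝ → ℝ) (k A B C : ℝ) (s : Set ℝ) : Prop :=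
  ∃ c, EqOn g (fun p => gapShape k A B C p + c) s

namespace IsGapShapeOn

variable {g : ℝ → ℝ} {k A B C lo hi p : ℝ} {s : Set ℝ}

lemma sub_eq (hg : IsGapShapeOn g k A B C s) {x y : ℝ} (hx : x ∈ s) (hy : y ∈ s) :
    g x - g y = gapShape k A B C x - gapShape k A B C y := by
  obtain ⟨c, hc⟩ := hg
  rw [hc hx, hc hy]
  ring

lemma le_max (hg : IsGapShapeOn g k A B C (Icc lo hi)) (hlo : 0 < lo)
    (hconv : ∀ x ∈ Ioo lo hi, x ^ 2 ≤ (B * x - 2 * C) * log 2) (hp : p ∈ Icc lo hi) :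
    g p ≤ max (g lo) (g hi) := by
  obtain ⟨c, hc⟩ := hg
  have hle := hp.1.trans hp.2
  have := (convexOn_gapShape (k := k) (A := A) hlo hconv).le_max_of_mem_Icc
    (left_mem_Icc.mpr hle) (right_mem_Icc.mpr hle) hp
  rw [hc hp, hc (left_mem_Icc.mpr hle), hc (right_mem_Icc.mpr hle), max_add_add_right]
  dsimp only
  linarith

lemma monotoneOn (hg : IsGapShapeOn g k A B C (Icc lo hi)) (hlo : 0 < lo)
    (hC : 2 * C * log 2 ≤ lo ^ 2) (h_lo : 0 ≤ gapShapeDeriv k A B C lo)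
    (h_hi : 0 ≤ gapShapeDeriv k A B C hi) : MonotoneOn g (Icc lo hi) := by
  obtain ⟨c, hc⟩ := hg
  intro x hx y hy hxy
  have := monotoneOn_gapShape hlo hC h_lo h_hi hx hy hxy
  rw [hc hx, hc hy]
  dsimp only
  linarith

lemma le_tangent (hg : IsGapShapeOn g k A B C (Icc lo hi)) (hlo : 0 < lo)
    (hconc : ∀ x ∈ Ioo lo hi, (B * x - 2 * C) * log 2 ≤ x ^ 2) {q : ℝ}
    (hq : q ∈ Icc lo hi) (hp : p ∈ Icc lo hi) :
    g p ≤ g q + gapShapeDeriv k A B C q * (p - q) := by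
  obtain ⟨c, hc⟩ := hg
  rw [hc hp, hc hq]
  have := (concaveOn_gapShape (k := k) (A := A) hlo hconc).le_add_mul_sub_of_hasDerivAt hq hp
    (hasDerivAt_gapShape (hlo.trans_le hq.1).ne')
  linarith

end IsGapShapeOn

lemma le_log_of_expTaylor_le {x y : ℝ} {n : ℕ} (hn : 0 < n) (hx : |x| ≤ 1) (hy : 0 < y)
    (h : ∑ m ∈ Finset.range n, x ^ m / m.factorial +
      |x| ^ n * (n.succ / (n.factorial * n)) ≤ y) :
    x ≤ log y := by
  rw [le_log_iff_exp_le hy]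
  linarith [(abs_le.mp (exp_bound hx hn)).2]

lemma log_le_of_le_expTaylor {x y : ℝ} {n : ℕ} (hn : 0 < n) (hx : |x| ≤ 1) (hy : 0 < y)
    (h : y ≤ ∑ m ∈ Finset.range n, x ^ m / m.factorial -
      |x| ^ n * (n.succ / (n.factorial * n))) :
    log y ≤ x := by
  rw [log_le_iff_le_exp hy]
  linarith [(abs_le.mp (exp_bound hx hn)).1]

lemma sqrt_two_mem : √2 ∈ Icc (1.4142135623 : ℝ) 1.4142135624 :=
  ⟨((lt_sqrt (by norm_num)).mpr (by norm_num)).le,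
    ((sqrt_lt' (by norm_num)).mpr (by norm_num)).le⟩

lemma log_two_mem : log 2 ∈ Icc (0.6931471803 : ℝ) 0.6931471808 :=
  ⟨log_two_gt_d9.le, log_two_lt_d9.le⟩

lemma log_0_5511_mem : log 0.5511 ∈ Icc (-0.5958389982 : ℝ) (-0.5958389980) :=
  ⟨le_log_of_expTaylor_le (n := 13) (by norm_num) (by norm_num [abs_le]) (by norm_num)
      (by norm_num [Finset.sum_range_succ, Nat.factorial]),
    log_le_of_le_expTaylor (n := 13) (by norm_num) (by norm_num [abs_le]) (by norm_num)
      (by norm_num [Finset.sum_range_succ, Nat.factorial])⟩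

lemma log_one_add_sqrt_two_div_four_mem :
    log ((1 + √2) / 4) ∈ Icc (-0.5049207742 : ℝ) (-0.5049207740) := by
  have hs := sqrt_two_mem
  constructor
  · refine (le_log_of_expTaylor_le (n := 13) (y := (1 + 1.4142135623) / 4) (by norm_num)
      (by norm_num [abs_le]) (by norm_num)
      (by norm_num [Finset.sum_range_succ, Nat.factorial])).trans
      (log_le_log (by norm_num) (by linarith [hs.1]))
  · refine (log_le_log (by positivity) (by linarith [hs.2])).trans
      (log_le_of_le_expTaylor (n := 13) (y := (1 + 1.4142135624) / 4) (by norm_num)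
      (by norm_num [abs_le]) (by norm_num) (by norm_num [Finset.sum_range_succ, Nat.factorial]))

lemma log_0_888_mem : log 0.888 ∈ Icc (-0.1187835360 : ℝ) (-0.1187835359) :=
  ⟨le_log_of_expTaylor_le (n := 10) (by norm_num) (by norm_num [abs_le]) (by norm_num)
      (by norm_num [Finset.sum_range_succ, Nat.factorial]),
    log_le_of_le_expTaylor (n := 10) (by norm_num) (by norm_num [abs_le]) (by norm_num)
      (by norm_num [Finset.sum_range_succ, Nat.factorial])⟩

lemma log_0_8983_mem : log 0.8983 ∈ Icc (-0.1072511908 : ℝ) (-0.1072511907) :=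
  ⟨le_log_of_expTaylor_le (n := 10) (by norm_num) (by norm_num [abs_le]) (by norm_num)
      (by norm_num [Finset.sum_range_succ, Nat.factorial]),
    log_le_of_le_expTaylor (n := 10) (by norm_num) (by norm_num [abs_le]) (by norm_num)
      (by norm_num [Finset.sum_range_succ, Nat.factorial])⟩

lemma log_two_add_sqrt_two_div_four :
    log ((2 + √2) / 4) = log ((1 + √2) / 4) + log 2 / 2 := by
  have h : (2 + √2) / 4 = √2 * ((1 + √2) / 4) := by
    ring_nf; rw [sq_sqrt (by norm_num)]; ring
  rw [h, log_mul (by positivity) (by positivity), log_sqrt (by norm_num)]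
  ring

lemma logb_two_add_sqrt_two_div_four :
    logb 2 ((2 + √2) / 4) = logb 2 ((1 + √2) / 4) + 1 / 2 := by
  rw [logb, logb, log_two_add_sqrt_two_div_four, add_div, div_div, mul_comm, ← div_div,
    div_self (log_pos one_lt_two).ne']

lemma div_one_add_sqrt_two_div_four (y : ℝ) : y / ((1 + √2) / 4) = y * (4 * √2 - 4) := by
  rw [div_eq_mul_inv, inv_eq_of_mul_eq_one_right]
  ring_nf
  rw [sq_sqrt zero_le_two]
  norm_num

lemma div_two_add_sqrt_two_div_four (y : ℝ) : y / ((2 + √2) / 4) = y * (4 - 2 * √2) := by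
  rw [div_eq_mul_inv, inv_eq_of_mul_eq_one_right]
  ring_nf
  rw [sq_sqrt zero_le_two]
  norm_num

lemma le_logb_two_of_le_log {t l : ℝ} (h : l ≤ log t) (hl : l ≤ 0) :
    l / 0.6931471803 ≤ logb 2 t := by
  obtain ⟨h2, -⟩ := log_two_mem
  rw [logb, div_le_div_iff₀ (by norm_num) (by linarith)]
  nlinarith [mul_le_mul_of_nonpos_left h2 hl]

lemma logb_two_le_of_log_le {t u : ℝ} (h : log t ≤ u) (hu : u ≤ 0) :
    logb 2 t ≤ u / 0.6931471808 := by
  obtain ⟨h2, h2'⟩ := log_two_mem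
  rw [logb, div_le_div_iff₀ (by linarith) (by norm_num)]
  nlinarith [mul_le_mul_of_nonpos_left h2' hu]

lemma one_div_log_two_mem : 1 / log 2 ∈ Icc (1 / 0.6931471808 : ℝ) (1 / 0.6931471803) := by
  obtain ⟨h2, h2'⟩ := log_two_mem
  exact ⟨one_div_le_one_div_of_le (by linarith) h2', one_div_le_one_div_of_le (by norm_num) h2⟩

def insertionCost (x : ℝ) : ℝ :=
  if x ≤ 0.5511 then ratFn 1 1 0 x
  else if x ≤ (1 + √2) / 4 then ratFn (25 / 6 - 2 * √2) (19 / 12) (7 / 32) x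
  else if x ≤ (2 + √2) / 4 then ratFn (13 / 3 - 2 * √2) ((9 + √2) / 6) (1 / 4) x
  else if x ≤ 0.888 then ratFn (14 / 3 - 2 * √2) (13 / 6) (3 / 8) x
  else ratFn 1 1 0 x

lemma breakpoints_lt :
    (0.5511 : ℝ) < (1 + √2) / 4 ∧ (1 + √2) / 4 < (2 + √2) / 4 ∧
      (2 + √2) / 4 < 0.888 := by
  obtain ⟨hs, hs'⟩ := sqrt_two_mem
  refine ⟨by linarith, by linarith, by linarith⟩

lemma insertionCost_eqOn₁ : EqOn insertionCost (ratFn 1 1 0) (Ioc (1 / 2) 0.5511) :=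
  fun _ hx => if_pos hx.2

lemma insertionCost_eqOn₂ :
    EqOn insertionCost (ratFn (25 / 6 - 2 * √2) (19 / 12) (7 / 32))
      (Ioc 0.5511 ((1 + √2) / 4)) :=
  fun _ hx => by rw [insertionCost, if_neg (not_le.mpr hx.1), if_pos hx.2]

lemma insertionCost_eqOn₃ :
    EqOn insertionCost (ratFn (13 / 3 - 2 * √2) ((9 + √2) / 6) (1 / 4))
      (Ioc ((1 + √2) / 4) ((2 + √2) / 4)) := fun _ hx => by
  obtain ⟨hab, -, -⟩ := breakpoints_lt
  rw [insertionCost, if_neg (not_le.mpr (hab.trans hx.1)), if_neg (not_le.mpr hx.1), if_pos hx.2]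

lemma insertionCost_eqOn₄ :
    EqOn insertionCost (ratFn (14 / 3 - 2 * √2) (13 / 6) (3 / 8)) (Ioc ((2 + √2) / 4) 0.888) :=
  fun _ hx => by
  obtain ⟨hab, hbc, -⟩ := breakpoints_lt
  rw [insertionCost, if_neg (not_le.mpr ((hab.trans hbc).trans hx.1)),
    if_neg (not_le.mpr (hbc.trans hx.1)), if_neg (not_le.mpr hx.1), if_pos hx.2]

lemma insertionCost_eqOn₅ : EqOn insertionCost (ratFn 1 1 0) (Ioc 0.888 1) := fun _ hx => by
  obtain ⟨hab, hbc, hcd⟩ := breakpoints_lt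
  rw [insertionCost, if_neg (not_le.mpr (((hab.trans hbc).trans hcd).trans hx.1)),
    if_neg (not_le.mpr ((hbc.trans hcd).trans hx.1)), if_neg (not_le.mpr (hcd.trans hx.1)),
    if_neg (not_le.mpr hx.1)]

lemma intervalIntegrable_insertionCost : IntervalIntegrable insertionCost volume (1 / 2) 1 := by
  obtain ⟨hab, hbc, hcd⟩ := breakpoints_lt
  have hb : (0 : ℝ) < (1 + √2) / 4 := by positivity
  have hc : (0 : ℝ) < (2 + √2) / 4 := by positivity
  exact ((((intervalIntegrable_of_eqOn_ratFn (by norm_num) (by norm_num)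
    insertionCost_eqOn₁).trans
    (intervalIntegrable_of_eqOn_ratFn (by norm_num) hab.le insertionCost_eqOn₂)).trans
    (intervalIntegrable_of_eqOn_ratFn hb hbc.le insertionCost_eqOn₃)).trans
    (intervalIntegrable_of_eqOn_ratFn hc hcd.le insertionCost_eqOn₄)).trans
    (intervalIntegrable_of_eqOn_ratFn (by norm_num) (by norm_num) insertionCost_eqOn₅)

lemma integral_insertionCost : ∫ x in (1 / 2 : ℝ)..1, insertionCost x =
    (ratPrimitive 1 1 0 0.5511 - ratPrimitive 1 1 0 (1 / 2)) +
    (ratPrimitive (25 / 6 - 2 * √2) (19 / 12) (7 / 32) ((1 + √2) / 4) -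
      ratPrimitive (25 / 6 - 2 * √2) (19 / 12) (7 / 32) 0.5511) +
    (ratPrimitive (13 / 3 - 2 * √2) ((9 + √2) / 6) (1 / 4) ((2 + √2) / 4) -
      ratPrimitive (13 / 3 - 2 * √2) ((9 + √2) / 6) (1 / 4) ((1 + √2) / 4)) +
    (ratPrimitive (14 / 3 - 2 * √2) (13 / 6) (3 / 8) 0.888 -
      ratPrimitive (14 / 3 - 2 * √2) (13 / 6) (3 / 8) ((2 + √2) / 4)) +
    (ratPrimitive 1 1 0 1 - ratPrimitive 1 1 0 0.888) := by
  obtain ⟨hab, hbc, hcd⟩ := breakpoints_lt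
  have hb : (0 : ℝ) < (1 + √2) / 4 := by positivity
  have hc : (0 : ℝ) < (2 + √2) / 4 := by positivity
  have i₁ := intervalIntegrable_of_eqOn_ratFn (by norm_num) (by norm_num) insertionCost_eqOn₁
  have i₂ := intervalIntegrable_of_eqOn_ratFn (by norm_num) hab.le insertionCost_eqOn₂
  have i₃ := intervalIntegrable_of_eqOn_ratFn hb hbc.le insertionCost_eqOn₃
  have i₄ := intervalIntegrable_of_eqOn_ratFn hc hcd.le insertionCost_eqOn₄
  have i₅ := intervalIntegrable_of_eqOn_ratFn (by norm_num) (by norm_num) insertionCost_eqOn₅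
  rw [← integral_add_adjacent_intervals (((i₁.trans i₂).trans i₃).trans i₄) i₅,
    ← integral_add_adjacent_intervals ((i₁.trans i₂).trans i₃) i₄,
    ← integral_add_adjacent_intervals (i₁.trans i₂) i₃,
    ← integral_add_adjacent_intervals i₁ i₂,
    integral_eq_ratPrimitive_sub (by norm_num) (by norm_num) insertionCost_eqOn₁,
    integral_eq_ratPrimitive_sub (by norm_num) hab.le insertionCost_eqOn₂,
    integral_eq_ratPrimitive_sub hb hbc.le insertionCost_eqOn₃,
    integral_eq_ratPrimitive_sub hc hcd.le insertionCost_eqOn₄,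
    integral_eq_ratPrimitive_sub (by norm_num) (by norm_num) insertionCost_eqOn₅]

lemma integral_insertionCost_mem :
    ∫ x in (1 / 2 : ℝ)..1, insertionCost x ∈ Icc (-0.20161309 : ℝ) (-0.20161308) := by
  obtain ⟨hs, hs'⟩ := sqrt_two_mem
  obtain ⟨l2, l2'⟩ := log_two_mem
  obtain ⟨la, la'⟩ := log_0_5511_mem
  obtain ⟨lb, lb'⟩ := log_one_add_sqrt_two_div_four_mem
  obtain ⟨ld, ld'⟩ := log_0_888_mem
  have hss : √2 * √2 = 2 := mul_self_sqrt zero_le_two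
  have hsl : 1.4142135623 * 0.6931471803 ≤ √2 * log 2 := by nlinarith
  have hsl' : √2 * log 2 ≤ 1.4142135624 * 0.6931471808 := by nlinarith
  rw [integral_insertionCost]
  simp only [ratPrimitive, log_two_add_sqrt_two_div_four, div_one_add_sqrt_two_div_four,
    div_two_add_sqrt_two_div_four, one_div, log_inv, log_one]
  constructor <;> linarith

-- `p` times the left-hand side of the theorem, plus `1.40118 * p`.
def insertionGap (p : ℝ) : ℝ :=
  -(p * logb 2 p) + 1.40118 * p - 1 + (∫ x in (1 / 2 : ℝ)..1, insertionCost x) +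
    ∫ x in (1 / 2 : ℝ)..p, insertionCost x

lemma isGapShapeOn_insertionGap {A B C lo hi : ℝ} (hlo : 1 / 2 ≤ lo) (hle : lo ≤ hi)
    (hhi : hi ≤ 1)
    (hcost : EqOn insertionCost (ratFn A B C) (Ioc lo hi)) :
    IsGapShapeOn insertionGap 1.40118 A B C (Icc lo hi) := by
  refine ⟨insertionGap lo - gapShape 1.40118 A B C lo, fun p hp => ?_⟩
  have hpiece := hcost.mono (Ioc_subset_Ioc_right hp.2)
  have hhead : IntervalIntegrable insertionCost volume (1 / 2) lo :=
    intervalIntegrable_insertionCost.mono_set (by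
      rw [uIcc_of_le hlo, uIcc_of_le (by norm_num)]; exact Icc_subset_Icc_right (hle.trans hhi))
  rw [insertionGap, insertionGap, ← integral_add_adjacent_intervals hhead
    (intervalIntegrable_of_eqOn_ratFn (by linarith) hp.1 hpiece),
    integral_eq_ratPrimitive_sub (by linarith) hp.1 hpiece]
  simp only [gapShape]
  ring

lemma insertionGap_half_nonpos : insertionGap (1 / 2) ≤ 0 := by
  have := integral_insertionCost_mem.2
  rw [insertionGap, integral_same, one_div, logb_inv, logb_self_eq_one one_lt_two]
  linarith

lemma insertionGap_one :
    insertionGap 1 = 1.40118 - 1 + 2 * ∫ x in (1 / 2 : ℝ)..1, insertionCost x := by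
  rw [insertionGap, logb_one]
  ring

lemma gapShapeDeriv_piece₂_nonneg :
    0 ≤ gapShapeDeriv 1.40118 (25 / 6 - 2 * √2) (19 / 12) (7 / 32) 0.5511 ∧
    0 ≤ gapShapeDeriv 1.40118 (25 / 6 - 2 * √2) (19 / 12) (7 / 32) ((1 + √2) / 4) := by
  obtain ⟨hs, hs'⟩ := sqrt_two_mem
  have hss : √2 * √2 = 2 := mul_self_sqrt zero_le_two
  have la := logb_two_le_of_log_le log_0_5511_mem.2 (by norm_num)
  have lb := logb_two_le_of_log_le log_one_add_sqrt_two_div_four_mem.2 (by norm_num)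
  have l2 := one_div_log_two_mem.2
  simp only [gapShapeDeriv, ratFn, sq, ← div_div, div_one_add_sqrt_two_div_four]
  constructor <;> linarith

lemma gapShapeDeriv_piece₃_nonneg :
    0 ≤ gapShapeDeriv 1.40118 (13 / 3 - 2 * √2) ((9 + √2) / 6) (1 / 4) ((1 + √2) / 4) ∧
    0 ≤ gapShapeDeriv 1.40118 (13 / 3 - 2 * √2) ((9 + √2) / 6) (1 / 4) ((2 + √2) / 4) := by
  obtain ⟨hs, hs'⟩ := sqrt_two_mem
  have hss : √2 * √2 = 2 := mul_self_sqrt zero_le_two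
  have lb := logb_two_le_of_log_le log_one_add_sqrt_two_div_four_mem.2 (by norm_num)
  have l2 := one_div_log_two_mem.2
  simp only [gapShapeDeriv, ratFn, sq, ← div_div, div_one_add_sqrt_two_div_four,
    div_two_add_sqrt_two_div_four, logb_two_add_sqrt_two_div_four]
  constructor <;> linarith

lemma gapShapeDeriv_piece₄_nonneg :
    0 ≤ gapShapeDeriv 1.40118 (14 / 3 - 2 * √2) (13 / 6) (3 / 8) ((2 + √2) / 4) ∧
    0 ≤ gapShapeDeriv 1.40118 (14 / 3 - 2 * √2) (13 / 6) (3 / 8) 0.888 := by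
  obtain ⟨hs, hs'⟩ := sqrt_two_mem
  have hss : √2 * √2 = 2 := mul_self_sqrt zero_le_two
  have lb := logb_two_le_of_log_le log_one_add_sqrt_two_div_four_mem.2 (by norm_num)
  have ld := logb_two_le_of_log_le log_0_888_mem.2 (by norm_num)
  have l2 := one_div_log_two_mem.2
  simp only [gapShapeDeriv, ratFn, sq, ← div_div, div_two_add_sqrt_two_div_four,
    logb_two_add_sqrt_two_div_four]
  constructor <;> linarith

lemma gapShapeDeriv_0_8983_nonneg : 0 ≤ gapShapeDeriv 1.40118 1 1 0 0.8983 := by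
  have lq := logb_two_le_of_log_le log_0_8983_mem.2 (by norm_num)
  have l2 := one_div_log_two_mem.2
  simp only [gapShapeDeriv, ratFn]
  linarith

lemma insertionGap_tangent_nonpos :
    insertionGap 0.8983 + gapShapeDeriv 1.40118 1 1 0 0.8983 * (1 - 0.8983) ≤ 0 := by
  have hq := (isGapShapeOn_insertionGap (by norm_num) (by norm_num) le_rfl
    insertionCost_eqOn₅).sub_eq (right_mem_Icc.mpr (by norm_num))
    (by norm_num : (0.8983 : ℝ) ∈ Icc 0.888 1)
  have J := integral_insertionCost_mem.2
  obtain ⟨lq, lq'⟩ := log_0_8983_mem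
  have bq := le_logb_two_of_le_log lq (by norm_num)
  have bq' := logb_two_le_of_log_le lq' (by norm_num)
  have l2 := one_div_log_two_mem.1
  rw [insertionGap_one] at hq
  simp only [gapShape, gapShapeDeriv, ratPrimitive, ratFn, logb_one, log_one] at hq ⊢
  linarith

lemma insertionGap_nonpos_of_mem_tail {p : ℝ} (hp : p ∈ Icc (0.888 : ℝ) 1) :
    insertionGap p ≤ 0 := by
  have hg := isGapShapeOn_insertionGap (by norm_num) (by norm_num) le_rfl insertionCost_eqOn₅
  have hq : (0.8983 : ℝ) ∈ Icc 0.888 1 := by norm_num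
  have hconc : ∀ x ∈ Ioo (0.888 : ℝ) 1, (1 * x - 2 * 0) * log 2 ≤ x ^ 2 := fun x hx => by
    nlinarith [log_two_mem.2, hx.1]
  calc insertionGap p
      ≤ insertionGap 0.8983 + gapShapeDeriv 1.40118 1 1 0 0.8983 * (p - 0.8983) :=
        hg.le_tangent (by norm_num) hconc hq hp
    _ ≤ insertionGap 0.8983 + gapShapeDeriv 1.40118 1 1 0 0.8983 * (1 - 0.8983) := by
        gcongr
        exacts [gapShapeDeriv_0_8983_nonneg, hp.2]
    _ ≤ 0 := insertionGap_tangent_nonpos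

lemma monotoneOn_insertionGap_middle : MonotoneOn insertionGap (Icc 0.5511 0.888) := by
  obtain ⟨hab, hbc, hcd⟩ := breakpoints_lt
  obtain ⟨hs, hs'⟩ := sqrt_two_mem
  obtain ⟨l2, l2'⟩ := log_two_mem
  have mono₂ := (isGapShapeOn_insertionGap (by norm_num) hab.le (by linarith)
    insertionCost_eqOn₂).monotoneOn (by norm_num) (by nlinarith)
    gapShapeDeriv_piece₂_nonneg.1 gapShapeDeriv_piece₂_nonneg.2
  have mono₃ := (isGapShapeOn_insertionGap (by linarith) hbc.le (by linarith)
    insertionCost_eqOn₃).monotoneOn (by positivity) (by nlinarith)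
    gapShapeDeriv_piece₃_nonneg.1 gapShapeDeriv_piece₃_nonneg.2
  have mono₄ := (isGapShapeOn_insertionGap (by linarith) hcd.le (by norm_num)
    insertionCost_eqOn₄).monotoneOn (by positivity) (by nlinarith)
    gapShapeDeriv_piece₄_nonneg.1 gapShapeDeriv_piece₄_nonneg.2
  have mono₂₃ := mono₂.union_right mono₃ (isGreatest_Icc hab.le) (isLeast_Icc hbc.le)
  rw [Icc_union_Icc_eq_Icc hab.le hbc.le] at mono₂₃
  have mono₂₃₄ :=
    mono₂₃.union_right mono₄ (isGreatest_Icc (hab.trans hbc).le) (isLeast_Icc hcd.le)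
  rwa [Icc_union_Icc_eq_Icc (hab.trans hbc).le hcd.le] at mono₂₃₄

lemma insertionGap_nonpos {p : ℝ} (hp : p ∈ Icc (1 / 2 : ℝ) 1) : insertionGap p ≤ 0 := by
  have hmid : ∀ x ∈ Icc (0.5511 : ℝ) 0.888, insertionGap x ≤ 0 := fun x hx =>
    (monotoneOn_insertionGap_middle hx (right_mem_Icc.mpr (by norm_num)) hx.2).trans
      (insertionGap_nonpos_of_mem_tail (left_mem_Icc.mpr (by norm_num)))
  rcases le_total p 0.5511 with hpa | hap
  · have hconv : ∀ x ∈ Ioo (1 / 2 : ℝ) 0.5511, x ^ 2 ≤ (1 * x - 2 * 0) * log 2 :=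
      fun x hx => by nlinarith [log_two_mem.1, hx.1, hx.2]
    exact ((isGapShapeOn_insertionGap le_rfl (by norm_num) (by norm_num)
      insertionCost_eqOn₁).le_max (by norm_num) hconv ⟨hp.1, hpa⟩).trans
      (max_le insertionGap_half_nonpos (hmid _ (left_mem_Icc.mpr (by norm_num))))
  rcases le_total p 0.888 with hpd | hdp
  · exact hmid p ⟨hap, hpd⟩
  · exact insertionGap_nonpos_of_mem_tail ⟨hdp, hp.2⟩

lemma eqOn_insertionCost {D : ℝ → ℝ}
    (h1 : ∀ x ∈ Ioc (1 / 2 : ℝ) 0.5511, D x = 1 - 1 / x)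
    (h2 : ∀ x ∈ Ioc (0.5511 : ℝ) ((1 + √2) / 4),
      D x = 25 / 6 - 2 * √2 - 19 / (12 * x) + 7 / (32 * x ^ 2))
    (h3 : ∀ x ∈ Ioc ((1 + √2) / 4) ((2 + √2) / 4),
      D x = 13 / 3 - 2 * √2 - (9 + √2) / (6 * x) + 1 / (4 * x ^ 2))
    (h4 : ∀ x ∈ Ioc ((2 + √2) / 4) (0.888 : ℝ),
      D x = 14 / 3 - 2 * √2 - 13 / (6 * x) + 3 / (8 * x ^ 2))
    (h5 : ∀ x ∈ Ioc (0.888 : ℝ) 1, D x = 1 - 1 / x) :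
    EqOn D insertionCost (Ioc (1 / 2) 1) := by
  intro x hx
  rcases le_or_gt x 0.5511 with ha | ha
  · rw [h1 x ⟨hx.1, ha⟩, insertionCost_eqOn₁ ⟨hx.1, ha⟩, ratFn]; ring
  rcases le_or_gt x ((1 + √2) / 4) with hb | hb
  · rw [h2 x ⟨ha, hb⟩, insertionCost_eqOn₂ ⟨ha, hb⟩, ratFn]; ring
  rcases le_or_gt x ((2 + √2) / 4) with hc | hc
  · rw [h3 x ⟨hb, hc⟩, insertionCost_eqOn₃ ⟨hb, hc⟩, ratFn]; ring
  rcases le_or_gt x 0.888 with hd | hd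
  · rw [h4 x ⟨hc, hd⟩, insertionCost_eqOn₄ ⟨hc, hd⟩, ratFn]; ring
  · rw [h5 x ⟨hd, hx.2⟩, insertionCost_eqOn₅ ⟨hd, hx.2⟩, ratFn]; ring

end

/-- The per-step cost function `D` of (1,2)Insertion integrates to a
linear-term coefficient at most `-1.40118` for every `p ∈ (1/2, 1]`. -/
theorem twelveInsertion_linear_coefficient (D : ℝ → ℝ)
    (h1 : ∀ x ∈ Set.Ioc (1/2 : ℝ) 0.5511, D x = 1 - 1/x)
    (h2 : ∀ x ∈ Set.Ioc (0.5511 : ℝ) ((1 + Real.sqrt 2)/4),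
      D x = 25/6 - 2*Real.sqrt 2 - 19/(12*x) + 7/(32*x^2))
    (h3 : ∀ x ∈ Set.Ioc ((1 + Real.sqrt 2)/4) ((2 + Real.sqrt 2)/4),
      D x = 13/3 - 2*Real.sqrt 2 - (9 + Real.sqrt 2)/(6*x) + 1/(4*x^2))
    (h4 : ∀ x ∈ Set.Ioc ((2 + Real.sqrt 2)/4) (0.888 : ℝ),
      D x = 14/3 - 2*Real.sqrt 2 - 13/(6*x) + 3/(8*x^2))
    (h5 : ∀ x ∈ Set.Ioc (0.888 : ℝ) 1, D x = 1 - 1/x) :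
    ∀ p ∈ Set.Ioc (1/2 : ℝ) 1,
      -Real.logb 2 p
        + (1/p) * (-1 + (∫ x in (1/2 : ℝ)..1, D x) + ∫ x in (1/2 : ℝ)..p, D x)
      ≤ -1.40118 := by
  intro p hp
  have hD := eqOn_insertionCost h1 h2 h3 h4 h5
  have hp0 : 0 < p := by linarith [hp.1]
  rw [integral_congr_Ioo_of_le (by norm_num) (hD.mono Ioo_subset_Ioc_self),
    integral_congr_Ioo_of_le hp.1.le
      (hD.mono (Ioo_subset_Ioc_self.trans (Ioc_subset_Ioc_right hp.2)))]
  have hgap : -logb 2 p + 1 / p * (-1 + (∫ x in (1 / 2 : ℝ)..1, insertionCost x) +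
      ∫ x in (1 / 2 : ℝ)..p, insertionCost x) = insertionGap p / p - 1.40118 := by
    rw [insertionGap]
    field_simp
    ring
  rw [hgap]
  linarith [div_nonpos_of_nonpos_of_nonneg (insertionGap_nonpos (Ioc_subset_Icc_self hp)) hp0.le]
end

section
/- Let D* : (1/2, 1] → ℝ be the piecewise function D*(x) = 1 − 1/x for x ∈ (1/2, 3/4 − √6/12] ∪ (3/4 + √3/12, 1]; D*(x) = 3/2 − 7/(4x) + 25/(96x²) for x ∈ (3/4 − √6/12, 3/4]; D*(x) = 2 − 5/(2x) + 13/(24x²) for x ∈ (3/4, 3/4 + √3/12]. Then for every p ∈ (1/2, 1], −log₂ p + (1/p)·(−1 + ∫_{1/2}^{1} D*(x) dx + ∫_{1/2}^{p} D*(x) dx) ≤ −1.4034. -/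
/-!
On each of its four pieces `D*` has the form `a - k/x + e/x²`, with primitive
`a x - k log x - e/x`, so on the `i`-th piece `∫_{1/2}^p D* = cᵢ + (a p - k log p - e/p)`, the
constants `cᵢ` being forced by continuity at the breakpoints; in particular
`∫_{1/2}^1 D* = c₄ + 1`. The quantity to bound becomes
`-log p / log 2 + (cᵢ + c₄ + a p - k log p - e/p) / p`. Replacing `-log p = 2 artanh ((1-p)/(1+p))`
by two terms of its series plus a geometric bound on the tail, `1 / log 2` by `1.4426951` and
`cᵢ + c₄` by a decimal upper bound (the logarithms in `cᵢ` are estimated with the same series),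
and clearing the denominator `30 p² (1+p)³`, leaves a polynomial inequality of degree 6 on each
piece. The margin is small: about `2·10⁻⁵` near `p = 1`.
-/

open Real Set MeasureTheory intervalIntegral

namespace TwelveInsertionStar

/-- With `t = (y-1)/(y+1)`, `log y = 2 artanh t = 2t + 2t³/3 + ∑_{j ≥ 2} 2t^(2j+1)/(2j+1)`, and the
last term here is `(2/5) t⁵/(1-t²)`, which dominates that tail. -/
theorem log_le_artanh_quintic {y : ℝ} (hy : 1 ≤ y) :
    log y ≤ 2 * (y - 1) / (y + 1) + 2 / 3 * ((y - 1) / (y + 1)) ^ 3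
      + (y - 1) ^ 5 / (10 * y * (y + 1) ^ 3) := by
  set f : ℝ → ℝ := fun x ↦ 2 * (x - 1) / (x + 1) + 2 / 3 * ((x - 1) / (x + 1)) ^ 3
    + (x - 1) ^ 5 / (10 * x * (x + 1) ^ 3) - log x with hf
  have hderiv : ∀ x, 0 < x → HasDerivAt f ((x - 1) ^ 6 / (10 * x ^ 2 * (x + 1) ^ 4)) x := by
    intro x hx
    have hx1 : x + 1 ≠ 0 := by positivity
    have hsub := (hasDerivAt_id' x).sub_const 1
    have hadd := (hasDerivAt_id' x).add_const 1
    have ht := hsub.fun_div hadd (by positivity)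
    have hq := (hsub.fun_pow 5).fun_div (((hasDerivAt_id' x).const_mul 10).fun_mul (hadd.fun_pow 3))
      (by positivity)
    refine (((hsub.const_mul 2).fun_div hadd (by positivity)).fun_add
      ((ht.fun_pow 3).const_mul (2 / 3))).fun_add hq |>.fun_sub (hasDerivAt_log hx.ne')
      |>.congr_deriv ?_
    norm_num
    field_simp
    ring
  have hmono : MonotoneOn f (Ici 1) := by
    refine monotoneOn_of_hasDerivWithinAt_nonneg (convex_Ici 1)
      (fun x hx ↦ (hderiv x (by linarith [mem_Ici.1 hx])).continuousAt.continuousWithinAt)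
      (fun x hx ↦ (hderiv x ?_).hasDerivWithinAt) (fun x hx ↦ by positivity)
    rw [interior_Ici] at hx
    linarith [mem_Ioi.1 hx]
  have := hmono self_mem_Ici hy hy
  norm_num [hf] at this
  linarith

theorem neg_log_mul_le {p : ℝ} (hp0 : 0 < p) (hp1 : p ≤ 1) :
    -log p * (30 * p * (1 + p) ^ 3)
      ≤ 60 * p * (1 - p) * (1 + p) ^ 2 + 20 * p * (1 - p) ^ 3 + 3 * (1 - p) ^ 5 := by
  have h := log_le_artanh_quintic (one_le_inv₀ hp0 |>.2 hp1)
  rw [log_inv] at h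
  calc -log p * (30 * p * (1 + p) ^ 3)
      ≤ (2 * (p⁻¹ - 1) / (p⁻¹ + 1) + 2 / 3 * ((p⁻¹ - 1) / (p⁻¹ + 1)) ^ 3
          + (p⁻¹ - 1) ^ 5 / (10 * p⁻¹ * (p⁻¹ + 1) ^ 3)) * (30 * p * (1 + p) ^ 3) :=
        mul_le_mul_of_nonneg_right h (by positivity)
    _ = 60 * p * (1 - p) * (1 + p) ^ 2 + 20 * p * (1 - p) ^ 3 + 3 * (1 - p) ^ 5 := by
        field_simp
        ring

noncomputable def primitive (a k e x : ℝ) : ℝ := a * x - k * log x - e / x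

theorem hasDerivAt_primitive (a k e : ℝ) {x : ℝ} (hx : x ≠ 0) :
    HasDerivAt (primitive a k e) (a - k / x + e / x ^ 2) x := by
  refine (((hasDerivAt_id' x).const_mul a).fun_sub ((hasDerivAt_log hx).const_mul k)).fun_sub
    ((hasDerivAt_inv hx).const_mul e) |>.congr_deriv ?_ |>.congr_of_eventuallyEq ?_
  · ring
  · filter_upwards with y
    simp [primitive, div_eq_mul_inv]

theorem integral_eq_primitive_of_eqOn_Ioc {f : ℝ → ℝ} {s u v a k e c p : ℝ} (hu : 0 < u)
    (hfsu : IntervalIntegrable f volume s u) (hcu : ∫ x in s..u, f x = c + primitive a k e u)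
    (hf : ∀ x ∈ Ioc u v, f x = a - k / x + e / x ^ 2) (hp : p ∈ Icc u v) :
    IntervalIntegrable f volume s p ∧ ∫ x in s..p, f x = c + primitive a k e p := by
  have hpos : ∀ x ∈ uIcc u p, 0 < x := fun x hx ↦ hu.trans_le (uIcc_of_le hp.1 ▸ hx).1
  have hfp : EqOn f (fun x ↦ a - k / x + e / x ^ 2) (uIoc u p) := fun x hx ↦
    hf x ⟨(uIoc_of_le hp.1 ▸ hx).1, (uIoc_of_le hp.1 ▸ hx).2.trans hp.2⟩
  have hg : IntervalIntegrable (fun x ↦ a - k / x + e / x ^ 2) volume u p :=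
    ContinuousOn.intervalIntegrable fun x hx ↦ by
      have hx0 := (hpos x hx).ne'
      exact ContinuousAt.continuousWithinAt (by fun_prop (disch := positivity))
  have hup : ∫ x in u..p, f x = primitive a k e p - primitive a k e u := by
    rw [integral_congr_ae (Filter.Eventually.of_forall fun x hx ↦ hfp hx)]
    exact integral_eq_sub_of_hasDerivAt
      (fun x hx ↦ hasDerivAt_primitive a k e (hpos x hx).ne') hg
  have hfup : IntervalIntegrable f volume u p := (intervalIntegrable_congr hfp).2 hg
  refine ⟨hfsu.trans hfup, ?_⟩
  rw [← integral_add_adjacent_intervals hfsu hfup, hcu, hup]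
  ring

noncomputable def breakLo : ℝ := 3 / 4 - √6 / 12

noncomputable def breakHi : ℝ := 3 / 4 + √3 / 12

theorem sqrt_six_mem : √6 ∈ Ioo 2.4494897427 2.4494897428 :=
  ⟨(lt_sqrt (by norm_num)).2 (by norm_num), (sqrt_lt' (by norm_num)).2 (by norm_num)⟩

theorem sqrt_three_mem : √3 ∈ Ioo 1.7320508075 1.7320508076 :=
  ⟨(lt_sqrt (by norm_num)).2 (by norm_num), (sqrt_lt' (by norm_num)).2 (by norm_num)⟩

theorem breakLo_mem : breakLo ∈ Ioo 0.5458758547 0.5458758548 := by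
  have := sqrt_six_mem
  constructor <;> unfold breakLo <;> linarith [this.1, this.2]

theorem breakHi_mem : breakHi ∈ Ioo 0.8943375672 0.8943375673 := by
  have := sqrt_three_mem
  constructor <;> unfold breakHi <;> linarith [this.1, this.2]

theorem Icc_half_one_eq_union :
    Icc (1 / 2 : ℝ) 1 = Icc (1 / 2) breakLo ∪ Icc breakLo (3 / 4) ∪ Icc (3 / 4) breakHi
      ∪ Icc breakHi 1 := by
  have hLo := breakLo_mem
  have hHi := breakHi_mem
  norm_num at hLo hHi
  rw [Icc_union_Icc_eq_Icc (by linarith) (by linarith),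
    Icc_union_Icc_eq_Icc (by linarith) (by linarith),
    Icc_union_Icc_eq_Icc (by linarith) (by linarith)]

theorem log_breakLo_lt : log breakLo < -0.6053637 := by
  have hlog2 := log_two_gt_d9
  have hy := log_le_artanh_quintic (y := 2 * 0.5458758548) (by norm_num)
  rw [log_mul two_ne_zero (by norm_num)] at hy
  have := log_lt_log (by linarith [breakLo_mem.1]) breakLo_mem.2
  norm_num at hy hlog2 ⊢
  linarith

theorem log_three_quarters_lt : log (3 / 4) < -0.287682072 := by
  have hlog2 := log_two_gt_d9
  have hy := log_le_artanh_quintic (y := 9 / 8) (by norm_num)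
  have h : log (9 / 8) = 2 * log (3 / 4) + log 2 := by
    rw [show (9 / 8 : ℝ) = (3 / 4) ^ 2 * 2 by norm_num, log_mul (by norm_num) two_ne_zero, log_pow]
    push_cast; ring
  norm_num at hy hlog2 h ⊢
  linarith

theorem log_breakHi_gt : -0.111671984 < log breakHi := by
  have hy := log_le_artanh_quintic (y := 0.8943375672⁻¹) (by norm_num)
  have := log_lt_log (by norm_num) breakHi_mem.1
  rw [log_inv] at hy
  norm_num at hy this ⊢
  linarith

/-- The constants of integration of `p ↦ ∫_{1/2}^p D*` on the four pieces. -/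
noncomputable def c₁ : ℝ := -1 / 2 - log 2

noncomputable def c₂ : ℝ := c₁ + √6 / 12 + 3 / 4 * log breakLo

noncomputable def c₃ : ℝ := c₂ + 3 / 4 * log (3 / 4)

noncomputable def c₄ : ℝ := c₃ + √3 / 6 - 3 / 2 * log breakHi

theorem c₁_lt : c₁ < -1.1931471 := by
  unfold c₁; linarith [log_two_gt_d9]

theorem c₂_lt : c₂ < -1.4430458 := by
  unfold c₂ c₁; linarith [log_two_gt_d9, sqrt_six_mem.2, log_breakLo_lt]

theorem c₃_lt : c₃ < -1.6588073 := by
  unfold c₃ c₂ c₁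
  linarith [log_two_gt_d9, sqrt_six_mem.2, log_breakLo_lt, log_three_quarters_lt]

theorem c₄_lt : c₄ < -1.2026242 := by
  unfold c₄ c₃ c₂ c₁
  linarith [log_two_gt_d9, sqrt_six_mem.2, log_breakLo_lt, log_three_quarters_lt,
    sqrt_three_mem.2, log_breakHi_gt]

theorem c₁_add_primitive_half : c₁ + primitive 1 1 0 (1 / 2) = 0 := by
  simp [c₁, primitive, log_inv]; ring

theorem c₁_add_primitive_breakLo :
    c₁ + primitive 1 1 0 breakLo = c₂ + primitive (3 / 2) (7 / 4) (25 / 96) breakLo := by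
  have hinv : 25 / 96 / breakLo = (9 + √6) / 24 := by
    have h6 : √6 ^ 2 = 6 := sq_sqrt (by norm_num)
    rw [div_eq_div_iff (by linarith [breakLo_mem.1]) (by norm_num)]
    unfold breakLo
    linear_combination (1 / 12) * h6
  simp only [c₂, primitive, hinv]
  unfold breakLo
  ring

theorem c₂_add_primitive_three_quarters :
    c₂ + primitive (3 / 2) (7 / 4) (25 / 96) (3 / 4)
      = c₃ + primitive 2 (5 / 2) (13 / 24) (3 / 4) := by
  simp only [c₃, primitive]; ring

theorem c₃_add_primitive_breakHi :
    c₃ + primitive 2 (5 / 2) (13 / 24) breakHi = c₄ + primitive 1 1 0 breakHi := by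
  have hinv : 13 / 24 / breakHi = (9 - √3) / 12 := by
    have h3 : √3 ^ 2 = 3 := sq_sqrt (by norm_num)
    rw [div_eq_div_iff (by linarith [breakHi_mem.1]) (by norm_num)]
    unfold breakHi
    linear_combination (1 / 12) * h3
  simp only [c₄, primitive, hinv]
  unfold breakHi
  ring

theorem integral_Dstar {Dstar : ℝ → ℝ}
    (h1 : ∀ x ∈ Ioc (1 / 2 : ℝ) breakLo, Dstar x = 1 - 1 / x)
    (h2 : ∀ x ∈ Ioc breakLo (3 / 4 : ℝ), Dstar x = 3 / 2 - 7 / (4 * x) + 25 / (96 * x ^ 2))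
    (h3 : ∀ x ∈ Ioc (3 / 4 : ℝ) breakHi, Dstar x = 2 - 5 / (2 * x) + 13 / (24 * x ^ 2))
    (h4 : ∀ x ∈ Ioc breakHi (1 : ℝ), Dstar x = 1 - 1 / x) :
    (∀ p ∈ Icc (1 / 2) breakLo, ∫ x in (1 / 2)..p, Dstar x = c₁ + primitive 1 1 0 p) ∧
    (∀ p ∈ Icc breakLo (3 / 4),
      ∫ x in (1 / 2)..p, Dstar x = c₂ + primitive (3 / 2) (7 / 4) (25 / 96) p) ∧
    (∀ p ∈ Icc (3 / 4) breakHi,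
      ∫ x in (1 / 2)..p, Dstar x = c₃ + primitive 2 (5 / 2) (13 / 24) p) ∧
    (∀ p ∈ Icc breakHi 1, ∫ x in (1 / 2)..p, Dstar x = c₄ + primitive 1 1 0 p) := by
  have hLo := breakLo_mem
  have hHi := breakHi_mem
  norm_num at hLo hHi
  have h1' : ∀ x ∈ Ioc (1 / 2 : ℝ) breakLo, Dstar x = 1 - 1 / x + 0 / x ^ 2 := fun x hx ↦ by
    rw [h1 x hx]; ring
  have h2' : ∀ x ∈ Ioc breakLo (3 / 4 : ℝ), Dstar x = 3 / 2 - 7 / 4 / x + 25 / 96 / x ^ 2 :=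
    fun x hx ↦ by rw [h2 x hx]; ring
  have h3' : ∀ x ∈ Ioc (3 / 4 : ℝ) breakHi, Dstar x = 2 - 5 / 2 / x + 13 / 24 / x ^ 2 :=
    fun x hx ↦ by rw [h3 x hx]; ring
  have h4' : ∀ x ∈ Ioc breakHi (1 : ℝ), Dstar x = 1 - 1 / x + 0 / x ^ 2 := fun x hx ↦ by
    rw [h4 x hx]; ring
  have I₁ := fun p ↦ integral_eq_primitive_of_eqOn_Ioc (p := p) (by norm_num) .refl
    (by rw [integral_same, c₁_add_primitive_half]) h1'
  obtain ⟨i₁, e₁⟩ := I₁ breakLo ⟨by linarith, le_rfl⟩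
  have I₂ := fun p ↦ integral_eq_primitive_of_eqOn_Ioc (p := p) (by linarith) i₁
    (e₁.trans c₁_add_primitive_breakLo) h2'
  obtain ⟨i₂, e₂⟩ := I₂ (3 / 4) ⟨by linarith, le_rfl⟩
  have I₃ := fun p ↦ integral_eq_primitive_of_eqOn_Ioc (p := p) (by norm_num) i₂
    (e₂.trans c₂_add_primitive_three_quarters) h3'
  obtain ⟨i₃, e₃⟩ := I₃ breakHi ⟨by linarith, le_rfl⟩
  have I₄ := fun p ↦ integral_eq_primitive_of_eqOn_Ioc (p := p) (by linarith) i₃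
    (e₃.trans c₃_add_primitive_breakHi) h4'
  exact ⟨fun p hp ↦ (I₁ p hp).2, fun p hp ↦ (I₂ p hp).2, fun p hp ↦ (I₃ p hp).2,
    fun p hp ↦ (I₄ p hp).2⟩

/-- `30 p² (1+p)³ · (B + c)`, where `B` bounds `-log₂ p + (K + primitive a k e p) / p` from above
through `neg_log_mul_le` and `1 / log 2 ≤ 1.4426951`. -/
noncomputable def slackPoly (a k e K c p : ℝ) : ℝ :=
  (1.4426951 * p + k) * (60 * p * (1 - p) * (1 + p) ^ 2 + 20 * p * (1 - p) ^ 3 + 3 * (1 - p) ^ 5)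
    + 30 * (1 + p) ^ 3 * ((a + c) * p ^ 2 + K * p - e)

theorem neg_logb_add_le_of_slackPoly_nonpos {a k e K Kc c p : ℝ} (hp0 : 0 < p) (hp1 : p ≤ 1)
    (hk : 0 ≤ k) (hK : K ≤ Kc) (hQ : slackPoly a k e Kc c p ≤ 0) :
    -logb 2 p + 1 / p * (K + primitive a k e p) ≤ -c := by
  have hL : 0 ≤ -log p := neg_nonneg.2 (log_nonpos hp0.le hp1)
  have hLN := neg_log_mul_le hp0 hp1
  have hlog2 : 0 < log 2 := log_pos one_lt_two
  have hinv : 1 / log 2 ≤ 1.4426951 := by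
    rw [div_le_iff₀ hlog2]; linarith [log_two_gt_d9]
  have hscaled : (-logb 2 p + 1 / p * (K + primitive a k e p) + c) * (30 * p ^ 2 * (1 + p) ^ 3)
      = -log p * (30 * p * (1 + p) ^ 3) * (1 / log 2 * p + k)
        + 30 * (1 + p) ^ 3 * ((a + c) * p ^ 2 + K * p - e) := by
    unfold logb primitive
    field_simp
    ring
  have hlogterm : -log p * (30 * p * (1 + p) ^ 3) * (1 / log 2 * p + k)
      ≤ (60 * p * (1 - p) * (1 + p) ^ 2 + 20 * p * (1 - p) ^ 3 + 3 * (1 - p) ^ 5)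
        * (1.4426951 * p + k) :=
    mul_le_mul hLN (by gcongr) (by positivity) ((by positivity : (0:ℝ) ≤ _).trans hLN)
  have hconst : 30 * (1 + p) ^ 3 * p * K ≤ 30 * (1 + p) ^ 3 * p * Kc := by gcongr
  have : (-logb 2 p + 1 / p * (K + primitive a k e p) + c) * (30 * p ^ 2 * (1 + p) ^ 3) ≤ 0 := by
    rw [hscaled]
    unfold slackPoly at hQ
    linear_combination hlogterm + hconst + hQ
  have := nonpos_of_mul_nonpos_left this (by positivity)
  linarith

/- The constants `K` are the sums of the decimal bounds `cᵢ_lt` and `c₄_lt`. -/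

theorem slackPoly_nonpos_of_mem₁ {p : ℝ} (hp : p ∈ Icc (1 / 2) breakLo) :
    slackPoly 1 1 0 (-2.3957713) 1.4034 p ≤ 0 := by
  have hlo : (0.5 : ℝ) ≤ p := by norm_num [hp.1]
  have hhi : p ≤ 0.5458759 := by linarith [hp.2, breakLo_mem.2]
  unfold slackPoly
  nlinarith [mul_nonneg (sub_nonneg.2 hlo) (sub_nonneg.2 hhi), sq_nonneg (p - 0.5),
    mul_nonneg (mul_nonneg (sub_nonneg.2 hlo) (sub_nonneg.2 hhi)) (sub_nonneg.2 hlo),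
    sq_nonneg (p * (p - 0.5)), sq_nonneg (p - 0.52), sq_nonneg (p - 0.5458759)]

theorem slackPoly_nonpos_of_mem₂ {p : ℝ} (hp : p ∈ Icc breakLo (3 / 4)) :
    slackPoly (3 / 2) (7 / 4) (25 / 96) (-2.645670) 1.4034 p ≤ 0 := by
  have hlo : (0.5458758 : ℝ) ≤ p := by linarith [hp.1, breakLo_mem.1]
  have hhi : p ≤ 0.75 := by norm_num [hp.2]
  unfold slackPoly
  nlinarith [mul_nonneg (sub_nonneg.2 hlo) (sub_nonneg.2 hhi), sq_nonneg (p - 0.75),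
    mul_nonneg (mul_nonneg (sub_nonneg.2 hlo) (sub_nonneg.2 hhi)) (sub_nonneg.2 hlo),
    sq_nonneg (p * (p - 0.7)), sq_nonneg (p - 0.65), sq_nonneg (p - 0.5458758)]

theorem slackPoly_nonpos_of_mem₃ {p : ℝ} (hp : p ∈ Icc (3 / 4) breakHi) :
    slackPoly 2 (5 / 2) (13 / 24) (-2.8614315) 1.4034 p ≤ 0 := by
  have hlo : (0.75 : ℝ) ≤ p := by norm_num [hp.1]
  have hhi : p ≤ 0.8943376 := by linarith [hp.2, breakHi_mem.2]
  unfold slackPoly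
  nlinarith [mul_nonneg (sub_nonneg.2 hlo) (sub_nonneg.2 hhi), sq_nonneg (p - 0.8),
    mul_nonneg (mul_nonneg (sub_nonneg.2 hlo) (sub_nonneg.2 hhi)) (sub_nonneg.2 hlo),
    sq_nonneg (p * (p - 0.8)), sq_nonneg (p - 0.89), sq_nonneg (p - 0.75)]

theorem slackPoly_nonpos_of_mem₄ {p : ℝ} (hp : p ∈ Icc breakHi 1) :
    slackPoly 1 1 0 (-2.4052484) 1.4034 p ≤ 0 := by
  have hlo : (0.8943375 : ℝ) ≤ p := by linarith [hp.1, breakHi_mem.1]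
  have hhi := hp.2
  unfold slackPoly
  nlinarith [sq_nonneg (p - 0.904), mul_nonneg (sub_nonneg.2 hlo) (sub_nonneg.2 hhi),
    mul_nonneg (mul_nonneg (sub_nonneg.2 hlo) (sub_nonneg.2 hhi)) (sub_nonneg.2 hlo),
    sq_nonneg p, sq_nonneg (p - 1), sq_nonneg (p * (p - 0.904)), sq_nonneg (p ^ 2 - 0.904)]

end TwelveInsertionStar

open TwelveInsertionStar in
/-- The per-step cost function `D*` of (1,2)Insertion* integrates to a
linear-term coefficient at most `-1.4034` for every `p ∈ (1/2, 1]`. -/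
theorem twelveInsertionStar_linear_coefficient (Dstar : ℝ → ℝ)
    (h1 : ∀ x ∈ Set.Ioc (1/2 : ℝ) (3/4 - Real.sqrt 6/12), Dstar x = 1 - 1/x)
    (h2 : ∀ x ∈ Set.Ioc (3/4 - Real.sqrt 6/12) (3/4 : ℝ),
      Dstar x = 3/2 - 7/(4*x) + 25/(96*x^2))
    (h3 : ∀ x ∈ Set.Ioc (3/4 : ℝ) (3/4 + Real.sqrt 3/12),
      Dstar x = 2 - 5/(2*x) + 13/(24*x^2))
    (h4 : ∀ x ∈ Set.Ioc (3/4 + Real.sqrt 3/12) (1 : ℝ), Dstar x = 1 - 1/x) :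
    ∀ p ∈ Set.Ioc (1/2 : ℝ) 1,
      -Real.logb 2 p
        + (1/p) * (-1 + (∫ x in (1/2 : ℝ)..1, Dstar x) + ∫ x in (1/2 : ℝ)..p, Dstar x)
      ≤ -1.4034 := by
  intro p ⟨hp_lo, hp_hi⟩
  obtain ⟨I₁, I₂, I₃, I₄⟩ := integral_Dstar h1 h2 h3 h4
  have hT : ∫ x in (1/2 : ℝ)..1, Dstar x = c₄ + 1 := by
    rw [I₄ 1 ⟨by linarith [breakHi_mem.2], le_rfl⟩]; simp [primitive]
  have key : ∀ {a k e c Kc : ℝ}, 0 ≤ k → c + c₄ ≤ Kc → slackPoly a k e Kc 1.4034 p ≤ 0 →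
      ∫ x in (1/2 : ℝ)..p, Dstar x = c + primitive a k e p →
      -logb 2 p + 1 / p * (-1 + (c₄ + 1) + ∫ x in (1/2 : ℝ)..p, Dstar x) ≤ -1.4034 := by
    intro a k e c Kc hk hK hQ hI
    rw [hI, show -1 + (c₄ + 1) + (c + primitive a k e p) = c + c₄ + primitive a k e p by ring]
    exact neg_logb_add_le_of_slackPoly_nonpos (by linarith) hp_hi hk hK hQ
  rw [hT]
  rcases Icc_half_one_eq_union ▸ Ioc_subset_Icc_self ⟨hp_lo, hp_hi⟩ with ((hp | hp) | hp) | hp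
  · exact key zero_le_one (by linarith [c₁_lt, c₄_lt]) (slackPoly_nonpos_of_mem₁ hp) (I₁ p hp)
  · exact key (by norm_num) (by linarith [c₂_lt, c₄_lt]) (slackPoly_nonpos_of_mem₂ hp) (I₂ p hp)
  · exact key (by norm_num) (by linarith [c₃_lt, c₄_lt]) (slackPoly_nonpos_of_mem₃ hp) (I₃ p hp)
  · exact key zero_le_one (by linarith [c₄_lt]) (slackPoly_nonpos_of_mem₄ hp) (I₄ p hp)
end

section
/- For every integer i ≥ 2, with m = ⌈log₂(i−1)⌉, the following exact identity holds: Σ_{t=1}^{i−1} t·⌈log₂ t⌉ = m·i(i−1)/2 − 4^m/6 − 2^m/2 + 2/3. -/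
/-!
Induct on the upper limit `n`. While `n + 1 ≤ 2 ^ m` with `m = ⌈log₂ n⌉`, the exponent does not move
and the closed form grows by exactly `(n + 1) * m`. The exponent only jumps, to `m + 1`, when
`n = 2 ^ m`, and there the change of the terms `4 ^ m / 6 + 2 ^ m / 2` is what absorbs the extra
`(n + 1) * (n + 2) / 2` created by the coefficient `m + 1`.
-/

namespace Nat

theorem clog_succ_of_lt_pow_clog {b n : ℕ} (hb : 1 < b) (h : n < b ^ clog b n) :
    clog b (n + 1) = clog b n :=
  le_antisymm ((clog_le_iff_le_pow hb).2 h) (clog_mono_right b n.le_succ)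

theorem clog_pow_add_one {b : ℕ} (hb : 1 < b) (m : ℕ) : clog b (b ^ m + 1) = m + 1 := by
  apply le_antisymm
  · rw [clog_le_iff_le_pow hb, pow_succ]
    nlinarith [one_le_pow m b (by omega)]
  · exact (lt_clog_iff_pow_lt hb).2 (lt_add_one _)

end Nat

theorem sum_Icc_mul_clog_two (n : ℕ) :
    ∑ t ∈ Finset.Icc 1 n, (t : ℝ) * (Nat.clog 2 t : ℝ)
      = (Nat.clog 2 n : ℝ) * ((n : ℝ) + 1) * (n : ℝ) / 2
        - (4 : ℝ) ^ Nat.clog 2 n / 6 - (2 : ℝ) ^ Nat.clog 2 n / 2 + 2 / 3 := by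
  induction n with
  | zero => norm_num
  | succ n ih =>
    rw [Finset.sum_Icc_succ_top (by omega), ih]
    rcases (Nat.le_pow_clog one_lt_two n).lt_or_eq with hlt | heq
    · rw [Nat.clog_succ_of_lt_pow_clog one_lt_two hlt]
      push_cast
      ring
    · set m := Nat.clog 2 n
      rw [heq, Nat.clog_pow_add_one one_lt_two]
      have h4 : (4 : ℝ) ^ m = 2 ^ m * 2 ^ m := by rw [← mul_pow]; norm_num
      push_cast
      rw [pow_succ (4 : ℝ), h4]
      ring

theorem sum_mul_clog_closed_form_general (i : ℕ) (m : ℕ)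
    (hm : m = Nat.clog 2 (i - 1)) :
    ∑ t ∈ Finset.Icc 1 (i - 1), (t : ℝ) * (Nat.clog 2 t : ℝ)
      = (m : ℝ) * (i : ℝ) * ((i : ℝ) - 1) / 2 - (4 : ℝ)^m / 6 - (2 : ℝ)^m / 2 + 2/3 := by
  subst hm
  cases i with
  | zero => norm_num
  | succ n =>
    rw [Nat.add_sub_cancel, sum_Icc_mul_clog_two]
    push_cast
    ring

/-- closed form for `Σ_{t=1}^{i-1} t·⌈log₂ t⌉` with `m = ⌈log₂(i-1)⌉`.
Here `⌈log₂ t⌉` is `Nat.clog 2 t`. -/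
theorem sum_mul_clog_closed_form (i : ℕ) (hi : 2 ≤ i) (m : ℕ)
    (hm : m = Nat.clog 2 (i - 1)) :
    ∑ t ∈ Finset.Icc 1 (i - 1), (t : ℝ) * (Nat.clog 2 t : ℝ)
      = (m : ℝ) * (i : ℝ) * ((i : ℝ) - 1) / 2 - (4 : ℝ)^m / 6 - (2 : ℝ)^m / 2 + 2/3 :=
  sum_mul_clog_closed_form_general i m hm
end

section
/- There exists a constant C > 0 such that for every even integer i ≥ 4, writing p_i = i/2^{⌈log₂ i⌉}, we have | Σ_{ℓ=1}^{i−1} ((i−ℓ)/binom(i,2)) · (⌈log₂(i−ℓ)⌉ + 1 − 2^{⌈log₂(i−ℓ)⌉}/(i−ℓ)) − (⌈log₂(i−1)⌉ + 1 − 2/p_i + 1/(3·p_i²)) | ≤ C/i. -/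
/-!
Reflecting `ℓ ↦ i - ℓ` turns the sum into
`(∑_{1 ≤ j < i} (j (⌈log₂ j⌉ + 1) - 2^⌈log₂ j⌉)) / binom(i, 2)`.
The summand is affine in `j` on each dyadic block `2^(c-1) < j ≤ 2^c`, so the sum has a
closed form in `n = i - 1` and `2^⌈log₂ n⌉`. For even `i ≥ 4`, `i - 1` is odd and not `1`,
hence not a power of two, so `⌈log₂ (i - 1)⌉ = ⌈log₂ i⌉`; with `x = 2^⌈log₂ i⌉ ∈ [i, 2i)`
the error is then exactly `(x² - 3ix + 2i) / (3i²(i - 1))`, and `x(3i - x) ≤ 9i²/4`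
bounds it by `1/i`.
-/

open Finset

theorem Nat.clog_two_sub_one_of_even {n : ℕ} (hn : Even n) (h2 : 2 < n) :
    Nat.clog 2 (n - 1) = Nat.clog 2 n := by
  obtain ⟨m, rfl⟩ : ∃ m, n = m + 1 := ⟨n - 1, by omega⟩
  rw [Nat.add_sub_cancel, Nat.clog_eq_clog_succ_iff one_lt_two]
  intro hm
  have hodd : Odd m := by rwa [Nat.even_add_one, Nat.not_even_iff_odd] at hn
  have hc : Nat.clog 2 m = 0 := by
    by_contra hc
    rw [← hm, Nat.odd_pow_iff hc] at hodd
    exact absurd hodd (by decide)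
  rw [hc] at hm
  omega

theorem Nat.pow_clog_lt_mul {b n : ℕ} (hb : 1 < b) (hn : 1 < n) : b ^ Nat.clog b n < b * n := by
  have h := Nat.pow_pred_clog_lt_self hb hn
  obtain ⟨k, hk⟩ := Nat.exists_eq_succ_of_ne_zero (Nat.clog_pos hb hn).ne'
  rw [hk, Nat.pred_succ] at h
  rw [hk, pow_succ']
  exact Nat.mul_lt_mul_of_pos_left h (by omega)

theorem sum_Icc_mul_clog_add_one_sub_pow (n : ℕ) :
    6 * ∑ j ∈ Icc 1 n, ((j : ℝ) * (Nat.clog 2 j + 1) - 2 ^ Nat.clog 2 j) =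
      3 * (Nat.clog 2 n + 1) * n * (n + 1) + (2 ^ Nat.clog 2 n) ^ 2
        - 3 * 2 ^ Nat.clog 2 n - 6 * n * 2 ^ Nat.clog 2 n + 2 := by
  induction n with
  | zero => norm_num
  | succ n ih =>
    rw [sum_Icc_succ_top (by omega), mul_add, ih]
    rcases eq_or_ne (2 ^ Nat.clog 2 n) n with hpow | hpow
    · have hclog : Nat.clog 2 (n + 1) = Nat.clog 2 n + 1 := by
        refine le_antisymm (Nat.clog_le_of_le_pow ?_)
          ((Nat.clog_lt_clog_succ_iff one_lt_two).2 hpow)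
        have := Nat.one_le_two_pow (n := Nat.clog 2 n)
        rw [pow_succ]
        omega
      have hpowR : (2 : ℝ) ^ Nat.clog 2 n = n := by exact_mod_cast hpow
      rw [hclog]
      push_cast
      rw [← hpowR]
      ring
    · rw [← (Nat.clog_eq_clog_succ_iff one_lt_two).2 hpow]
      push_cast
      ring

theorem sum_Icc_sub_div_mul_eq_sum_div (n : ℕ) (D : ℝ) :
    ∑ ℓ ∈ Icc 1 (n - 1), (((n - ℓ : ℕ) : ℝ) / D) *
        ((Nat.clog 2 (n - ℓ) : ℝ) + 1 - (2 : ℝ) ^ (Nat.clog 2 (n - ℓ)) / ((n - ℓ : ℕ) : ℝ)) =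
      (∑ j ∈ Icc 1 (n - 1), ((j : ℝ) * (Nat.clog 2 j + 1) - 2 ^ Nat.clog 2 j)) / D := by
  rw [sum_div]
  refine sum_nbij' (n - ·) (n - ·) ?_ ?_ ?_ ?_ ?_ <;> intro ℓ hℓ <;>
    simp only [mem_Icc] at hℓ ⊢
  · omega
  · omega
  · omega
  · omega
  · have : ((n - ℓ : ℕ) : ℝ) ≠ 0 := by exact_mod_cast (by omega : n - ℓ ≠ 0)
    field_simp

theorem twoMerge_error_eq {i x k S : ℝ} (hi : i ≠ 0) (hi1 : i - 1 ≠ 0)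
    (hS : 6 * S = 3 * (k + 1) * (i - 1) * i + x ^ 2 - 3 * x - 6 * (i - 1) * x + 2) :
    S / (i * (i - 1) / 2) - (k + 1 - 2 / (i / x) + 1 / (3 * (i / x) ^ 2)) =
      (x ^ 2 - 3 * i * x + 2 * i) / (3 * i ^ 2 * (i - 1)) := by
  field_simp
  linear_combination i * hS

theorem abs_twoMerge_error_le {i x : ℝ} (hi : 4 ≤ i) (hix : i ≤ x) (hxi : x ≤ 2 * i) :
    |(x ^ 2 - 3 * i * x + 2 * i) / (3 * i ^ 2 * (i - 1))| ≤ 1 / i := by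
  have hden : 0 < 3 * i ^ 2 * (i - 1) := mul_pos (by positivity) (by linarith)
  rw [abs_div, abs_of_pos hden, div_le_div_iff₀ hden (by positivity),
    abs_of_nonpos (by nlinarith)]
  nlinarith [sq_nonneg (2 * x - 3 * i)]

/-- the average number of comparisons in Step 4 of 2Merge is
`⌈log₂(i-1)⌉ + 1 - 2/p_i + 1/(3p_i²)` up to an `O(1/i)` error, where
`p_i = i/2^⌈log₂ i⌉` and `⌈log₂ ·⌉` is `Nat.clog 2`. -/
theorem twoMerge_step4_average : ∃ C : ℝ, 0 < C ∧
    ∀ i : ℕ, 4 ≤ i → Even i →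
      |(∑ ℓ ∈ Finset.Icc 1 (i - 1),
          (((i - ℓ : ℕ) : ℝ) / ((i : ℝ) * ((i : ℝ) - 1) / 2)) *
            ((Nat.clog 2 (i - ℓ) : ℝ) + 1 - (2 : ℝ) ^ (Nat.clog 2 (i - ℓ)) / ((i - ℓ : ℕ) : ℝ)))
        - ((Nat.clog 2 (i - 1) : ℝ) + 1
            - 2 / ((i : ℝ) / 2 ^ (Nat.clog 2 i))
            + 1 / (3 * ((i : ℝ) / 2 ^ (Nat.clog 2 i))^2))|
      ≤ C / i := by
  refine ⟨1, one_pos, fun i hi heven => ?_⟩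
  have hclog := Nat.clog_two_sub_one_of_even heven (by omega)
  have hsum := sum_Icc_mul_clog_add_one_sub_pow (i - 1)
  rw [hclog, Nat.cast_sub (by omega), Nat.cast_one, sub_add_cancel] at hsum
  have hle : i ≤ 2 ^ Nat.clog 2 i := Nat.le_pow_clog one_lt_two i
  have hlt : 2 ^ Nat.clog 2 i < 2 * i := Nat.pow_clog_lt_mul one_lt_two (by omega)
  have hiR : (4 : ℝ) ≤ i := by exact_mod_cast hi
  rw [sum_Icc_sub_div_mul_eq_sum_div, hclog,
    twoMerge_error_eq (by positivity) (by linarith) hsum]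
  exact abs_twoMerge_error_le hiR (by exact_mod_cast hle) (by exact_mod_cast hlt.le)
end

section
/- Let f : [1/2, 1] → ℝ be monotone and continuous, and for a positive integer i let p_i = i/2^{⌈log₂ i⌉}. Then there exists a constant C > 0 such that for every integer n ≥ 2, | Σ_{i=1}^{n} f(p_i) − 2^{⌈log₂ n⌉}·( ∫_{1/2}^{1} f(x) dx + ∫_{1/2}^{p_n} f(x) dx ) | ≤ C·log₂ n. -/
/-!
On the dyadic block `2^k < i ≤ 2^(k+1)` all `p_i = i / 2^(k+1)` share one denominator, so the
partial sum of `f(p_i)` over that block is a right Riemann sum of `x ↦ f(x / 2^(k+1))` with unit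
steps. For a monotone function such a sum differs from the integral by at most the total
variation `f 1 - f (1/2)`. The integrals of complete blocks add up exactly to the main term,
so the error grows by at most `f 1 - f (1/2)` per block, and there are `⌈log₂ n⌉` blocks.
-/

open Finset

theorem Nat.clog_eq_of_pow_lt_of_le_pow {b k n : ℕ} (hb : 1 < b) (h1 : b ^ k < n)
    (h2 : n ≤ b ^ (k + 1)) : Nat.clog b n = k + 1 :=
  le_antisymm ((Nat.clog_le_iff_le_pow hb).2 h2) ((Nat.lt_clog_iff_pow_lt hb).2 h1)

theorem Nat.clog_lt_logb_add_one {b n : ℕ} (hb : 1 < b) (hn : 1 ≤ n) :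
    (Nat.clog b n : ℝ) < Real.logb b n + 1 := by
  rw [← Real.natCeil_logb_natCast]
  exact Nat.ceil_lt_add_one (Real.logb_nonneg (by exact_mod_cast hb) (by exact_mod_cast hn))

theorem MonotoneOn.apply_left_le_apply_right {α β : Type*} [Preorder α] [Preorder β]
    {f : α → β} {a b : α} (hf : MonotoneOn f (Set.Icc a b)) (hab : a ≤ b) : f a ≤ f b :=
  hf (Set.left_mem_Icc.2 hab) (Set.right_mem_Icc.2 hab) hab

theorem MonotoneOn.abs_sum_Ioc_sub_integral_le {f : ℝ → ℝ} {a b : ℕ} (hab : a ≤ b)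
    (hf : MonotoneOn f (Set.Icc (a : ℝ) b)) :
    |∑ i ∈ Ioc a b, f i - ∫ x in a..b, f x| ≤ f b - f a := by
  have hshift : ∑ i ∈ Ioc a b, f i = ∑ i ∈ Ico a b, f ↑(i + 1) := by
    rw [← Ico_add_one_add_one_eq_Ioc, ← sum_Ico_add']
  have htelescope : ∑ i ∈ Ioc a b, f i + f a = ∑ i ∈ Ico a b, f i + f b := by
    rw [sum_Ioc_add_eq_sum_Icc hab, sum_Ico_add_eq_sum_Icc hab]
  have hfab : f a ≤ f b := hf.apply_left_le_apply_right (by exact_mod_cast hab)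
  rw [abs_le]
  constructor
  · linarith [hf.integral_le_sum_Ico hab]
  · linarith [hf.sum_le_integral_Ico hab]

theorem MonotoneOn.abs_sum_Ioc_div_sub_integral_le {f : ℝ → ℝ} {c : ℝ} (hc : 0 < c)
    {a b : ℕ} (hab : a ≤ b) (hf : MonotoneOn f (Set.Icc (a / c) (b / c))) :
    |∑ i ∈ Ioc a b, f (i / c) - c * ∫ x in a / c..b / c, f x| ≤ f (b / c) - f (a / c) := by
  have hdiv : Monotone fun x : ℝ => x / c := fun _ _ h => div_le_div_of_nonneg_right h hc.le
  have hg : MonotoneOn (fun x => f (x / c)) (Set.Icc (a : ℝ) b) :=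
    hf.comp (hdiv.monotoneOn _) fun _ hx => ⟨hdiv hx.1, hdiv hx.2⟩
  simpa only [intervalIntegral.integral_comp_div f hc.ne', smul_eq_mul]
    using hg.abs_sum_Ioc_sub_integral_le hab

section MonotoneCost

variable {f : ℝ → ℝ}

theorem abs_sum_dyadic_block_sub_integral_le (hf : MonotoneOn f (Set.Icc (1/2 : ℝ) 1))
    {k m : ℕ} (h1 : 2 ^ k ≤ m) (h2 : m ≤ 2 ^ (k + 1)) :
    |∑ i ∈ Ioc (2 ^ k) m, f (i / 2 ^ (k + 1))
        - 2 ^ (k + 1) * ∫ x in (1/2 : ℝ)..(m / 2 ^ (k + 1)), f x| ≤ f 1 - f (1/2) := by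
  have hhalf : ((2 ^ k : ℕ) : ℝ) / 2 ^ (k + 1) = 1 / 2 := by
    rw [pow_succ]; push_cast; field_simp
  have hm : (m : ℝ) / 2 ^ (k + 1) ≤ 1 := by
    rw [div_le_one (by positivity)]; exact_mod_cast h2
  have hm' : 1 / 2 ≤ (m : ℝ) / 2 ^ (k + 1) := by
    rw [← hhalf]; gcongr
  have hblock := MonotoneOn.abs_sum_Ioc_div_sub_integral_le (by positivity) h1
    (hhalf ▸ hf.mono (Set.Icc_subset_Icc_right hm))
  rw [hhalf] at hblock
  linarith [hf ⟨hm', hm⟩ (Set.right_mem_Icc.2 (by norm_num)) hm]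

noncomputable def totalCostError (f : ℝ → ℝ) (n : ℕ) : ℝ :=
  (∑ i ∈ Icc 1 n, f ((i : ℝ) / 2 ^ (Nat.clog 2 i)))
    - 2 ^ (Nat.clog 2 n) *
      ((∫ x in (1/2 : ℝ)..1, f x) + ∫ x in (1/2 : ℝ)..((n : ℝ) / 2 ^ (Nat.clog 2 n)), f x)

/-- At `n = 2^k` the main term is `2^(k+1) ∫_{1/2}^1 f`, which is also its value at the start
of the next block; hence the error changes across a block only by the block's Riemann error. -/
theorem totalCostError_eq_add_of_mem_Ioc {k m : ℕ} (h1 : 2 ^ k < m) (h2 : m ≤ 2 ^ (k + 1)) :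
    totalCostError f m = totalCostError f (2 ^ k)
      + (∑ i ∈ Ioc (2 ^ k) m, f (i / 2 ^ (k + 1))
        - 2 ^ (k + 1) * ∫ x in (1/2 : ℝ)..(m / 2 ^ (k + 1)), f x) := by
  have hblock : ∑ i ∈ Ioc (2 ^ k) m, f ((i : ℝ) / 2 ^ (Nat.clog 2 i))
      = ∑ i ∈ Ioc (2 ^ k) m, f (i / 2 ^ (k + 1)) := by
    refine sum_congr rfl fun i hi => ?_
    rw [mem_Ioc] at hi
    rw [Nat.clog_eq_of_pow_lt_of_le_pow one_lt_two hi.1 (hi.2.trans h2)]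
  have hpow : ((2 ^ k : ℕ) : ℝ) / 2 ^ k = 1 := by push_cast; exact div_self (by positivity)
  have hIcc (n : ℕ) : Icc 1 n = Ioc 0 n := Icc_add_one_left_eq_Ioc 0 n
  simp only [totalCostError, hIcc]
  rw [← sum_Ioc_consecutive _ (Nat.zero_le _) h1.le, hblock,
    Nat.clog_eq_of_pow_lt_of_le_pow one_lt_two h1 h2, Nat.clog_pow 2 k one_lt_two, hpow, pow_succ]
  ring

theorem abs_totalCostError_le (hf : MonotoneOn f (Set.Icc (1/2 : ℝ) 1)) (k : ℕ) {m : ℕ}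
    (hm : 1 ≤ m) (hmk : m ≤ 2 ^ k) :
    |totalCostError f m| ≤ |totalCostError f 1| + k * (f 1 - f (1/2)) := by
  have hvar : f (1/2) ≤ f 1 := hf.apply_left_le_apply_right (by norm_num)
  induction k generalizing m with
  | zero =>
    obtain rfl : m = 1 := le_antisymm hmk hm
    simp
  | succ k ih =>
    rcases le_or_gt m (2 ^ k) with hmk' | hmk'
    · push_cast
      linarith [ih hm hmk']
    · rw [totalCostError_eq_add_of_mem_Ioc hmk' hmk]
      calc _ ≤ |totalCostError f (2 ^ k)| + |∑ i ∈ Ioc (2 ^ k) m, f (i / 2 ^ (k + 1))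
                - 2 ^ (k + 1) * ∫ x in (1/2 : ℝ)..(m / 2 ^ (k + 1)), f x| := abs_add_le _ _
        _ ≤ (|totalCostError f 1| + k * (f 1 - f (1/2))) + (f 1 - f (1/2)) :=
          add_le_add (ih Nat.one_le_two_pow le_rfl)
            (abs_sum_dyadic_block_sub_integral_le hf hmk'.le hmk)
        _ = _ := by push_cast; ring

end MonotoneCost

theorem total_cost_riemann_sum_estimate_general (f : ℝ → ℝ)
    (hmono : MonotoneOn f (Set.Icc (1/2 : ℝ) 1)) :
    ∃ C : ℝ, 0 < C ∧ ∀ n : ℕ, 2 ≤ n →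
      |(∑ i ∈ Finset.Icc 1 n, f ((i : ℝ) / 2 ^ (Nat.clog 2 i)))
          - 2 ^ (Nat.clog 2 n) *
            ((∫ x in (1/2 : ℝ)..1, f x)
              + ∫ x in (1/2 : ℝ)..((n : ℝ) / 2 ^ (Nat.clog 2 n)), f x)|
        ≤ C * Real.logb 2 n := by
  have hvar : f (1/2) ≤ f 1 := hmono.apply_left_le_apply_right (by norm_num)
  refine ⟨|totalCostError f 1| + 2 * (f 1 - f (1/2)) + 1, by positivity, fun n hn => ?_⟩
  have hlog : 1 ≤ Real.logb 2 n := by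
    rw [Real.le_logb_iff_rpow_le one_lt_two (by norm_cast; omega), Real.rpow_one]
    exact_mod_cast hn
  have hclog : (Nat.clog 2 n : ℝ) < Real.logb 2 n + 1 := by
    exact_mod_cast Nat.clog_lt_logb_add_one one_lt_two (by omega)
  calc |totalCostError f n|
      ≤ |totalCostError f 1| + Nat.clog 2 n * (f 1 - f (1/2)) :=
        abs_totalCostError_le hmono _ (by omega) (Nat.le_pow_clog one_lt_two n)
    _ ≤ _ := by nlinarith [abs_nonneg (totalCostError f 1)]

/-- evaluating `Σ_{i=1}^n f(p_i)` for a monotone continuous cost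
function `f : [1/2,1] → ℝ`, where `p_i = i/2^⌈log₂ i⌉` (with `Nat.clog 2`). -/
theorem total_cost_riemann_sum_estimate (f : ℝ → ℝ)
    (hmono : MonotoneOn f (Set.Icc (1/2 : ℝ) 1))
    (hcont : ContinuousOn f (Set.Icc (1/2 : ℝ) 1)) :
    ∃ C : ℝ, 0 < C ∧ ∀ n : ℕ, 2 ≤ n →
      |(∑ i ∈ Finset.Icc 1 n, f ((i : ℝ) / 2 ^ (Nat.clog 2 i)))
          - 2 ^ (Nat.clog 2 n) *
            ((∫ x in (1/2 : ℝ)..1, f x)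
              + ∫ x in (1/2 : ℝ)..((n : ℝ) / 2 ^ (Nat.clog 2 n)), f x)|
        ≤ C * Real.logb 2 n :=
  total_cost_riemann_sum_estimate_general f hmono
end

section
/- There exists a constant C > 0 such that for every integer n ≥ 2, writing p_n = n/2^{⌈log₂ n⌉}, we have | Σ_{i=1}^{n} ( ⌈log₂ i⌉ + 1 − 2^{⌈log₂ i⌉}/i ) − ( n·log₂ n + (1 − log₂ p_n − (1 + ln(4·p_n))/p_n)·n ) | ≤ C·log₂ n. -/
/-!
Write `k = ⌈log₂ n⌉`. Since `∑_{i ≤ n} ⌈log₂ i⌉ = n k - 2^k + 1` exactly, the difference between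
the sum and the main term is `E n = 2^k log (4 n / 2^k) - ∑_{i ≤ n} 2^{⌈log₂ i⌉} / i + 1`. The smooth
term `2^k log (4 n / 2^k)` is continuous across powers of two, so in both cases
`E (n + 1) - E n = 2^{⌈log₂ (n+1)⌉} (log (n + 1) - log n - 1 / (n + 1))`, which lies in
`[0, 2^{⌈log₂ (n+1)⌉} / (n (n + 1))]`. Hence `E` is nonnegative and, telescoping the upper bound
inside each dyadic block, `E n ≤ 2 log 2 + 1 + k = O(log n)`.
-/

open Finset Real

theorem Nat.clog_succ_eq_or {b n : ℕ} (hb : 1 < b) :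
    clog b (n + 1) = clog b n ∨ (b ^ clog b n = n ∧ clog b (n + 1) = clog b n + 1) := by
  by_cases h : b ^ clog b n = n
  · refine Or.inr ⟨h, le_antisymm ?_ ((clog_lt_clog_succ_iff hb).2 h)⟩
    have hn : 0 < n := h ▸ pow_pos (by omega) _
    rw [clog_le_iff_le_pow hb, pow_succ, h]
    nlinarith
  · exact Or.inl ((clog_eq_clog_succ_iff hb).2 h).symm

theorem sum_Icc_clog_two (n : ℕ) :
    ∑ i ∈ Icc 1 n, (Nat.clog 2 i : ℝ) = n * Nat.clog 2 n - 2 ^ Nat.clog 2 n + 1 := by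
  induction n with
  | zero => simp
  | succ n ih =>
    rw [sum_Icc_succ_top (by omega), ih]
    rcases Nat.clog_succ_eq_or (n := n) one_lt_two with h | ⟨hpow, h⟩
    · rw [h]
      push_cast
      ring
    · have hpow' : (2 : ℝ) ^ Nat.clog 2 n = n := by exact_mod_cast hpow
      rw [h]
      push_cast
      rw [pow_succ, hpow']
      ring

theorem inv_add_one_le_log_add_one_sub_log {x : ℝ} (hx : 0 < x) :
    (x + 1)⁻¹ ≤ log (x + 1) - log x := by
  have h := one_sub_inv_le_log_of_pos (div_pos (by linarith : 0 < x + 1) hx)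
  rwa [log_div (by linarith) hx.ne', inv_div,
    show 1 - x / (x + 1) = (x + 1)⁻¹ by field_simp; ring] at h

theorem log_add_one_sub_log_le_inv {x : ℝ} (hx : 0 < x) :
    log (x + 1) - log x ≤ x⁻¹ := by
  have h := log_le_sub_one_of_pos (div_pos (by linarith : 0 < x + 1) hx)
  rwa [log_div (by linarith) hx.ne', show (x + 1) / x - 1 = x⁻¹ by field_simp; ring] at h

theorem Nat.clog_le_logb_add_one {b n : ℕ} (hb : 1 < b) (hn : 1 ≤ n) :
    (Nat.clog b n : ℝ) ≤ logb b n + 1 := by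
  rw [← natCeil_logb_natCast]
  exact (Nat.ceil_lt_add_one (logb_nonneg (by exact_mod_cast hb) (by exact_mod_cast hn))).le

theorem log_four_mul_div_two_pow {x : ℝ} (hx : 0 < x) (k : ℕ) :
    log (4 * x / 2 ^ k) = log x - (k - 2) * log 2 := by
  rw [log_div (by positivity) (by positivity), log_mul (by norm_num) hx.ne', log_pow,
    show (4 : ℝ) = 2 ^ 2 by norm_num, log_pow]
  push_cast
  ring

theorem two_pow_clog_succ_div_sub_clog_succ (n : ℕ) :
    (2 : ℝ) ^ Nat.clog 2 (n + 1) / n - Nat.clog 2 (n + 1) =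
      2 ^ Nat.clog 2 n / n - Nat.clog 2 n := by
  rcases Nat.clog_succ_eq_or (n := n) one_lt_two with h | ⟨hpow, h⟩
  · rw [h]
  · have hpow' : (2 : ℝ) ^ Nat.clog 2 n = n := by exact_mod_cast hpow
    have hn : (n : ℝ) ≠ 0 := hpow' ▸ by positivity
    rw [h, pow_succ, hpow', div_self hn, mul_div_cancel_left₀ _ hn]
    push_cast
    ring

namespace BinaryInsertion

variable {n : ℕ}

noncomputable def errorTerm (n : ℕ) : ℝ :=
  2 ^ Nat.clog 2 n * log (4 * n / 2 ^ Nat.clog 2 n) -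
    ∑ i ∈ Icc 1 n, (2 : ℝ) ^ Nat.clog 2 i / i + 1

theorem errorTerm_one : errorTerm 1 = 2 * log 2 := by
  simp [errorTerm, show (4 : ℝ) = 2 ^ 2 by norm_num]

theorem errorTerm_succ_sub (hn : 1 ≤ n) :
    errorTerm (n + 1) - errorTerm n =
      2 ^ Nat.clog 2 (n + 1) * (log (n + 1) - log n - (n + 1 : ℝ)⁻¹) := by
  have hn' : (0 : ℝ) < n := by exact_mod_cast hn
  rw [errorTerm, errorTerm, sum_Icc_succ_top (by omega), log_four_mul_div_two_pow hn',
    log_four_mul_div_two_pow (by positivity)]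
  push_cast
  rcases Nat.clog_succ_eq_or (n := n) one_lt_two with h | ⟨hpow, h⟩
  · rw [h]
    ring
  · have hpow' : (2 : ℝ) ^ Nat.clog 2 n = n := by exact_mod_cast hpow
    have hlog : log n = Nat.clog 2 n * log 2 := by rw [← hpow', log_pow]
    rw [h, hlog]
    push_cast
    ring

theorem errorTerm_le_succ (hn : 1 ≤ n) : errorTerm n ≤ errorTerm (n + 1) := by
  have hn' : (0 : ℝ) < n := by exact_mod_cast hn
  rw [← sub_nonneg, errorTerm_succ_sub hn]
  exact mul_nonneg (by positivity) (by linarith [inv_add_one_le_log_add_one_sub_log hn'])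

theorem errorTerm_nonneg (hn : 1 ≤ n) : 0 ≤ errorTerm n := by
  induction n, hn using Nat.le_induction with
  | base => rw [errorTerm_one]; positivity
  | succ n hn ih => exact ih.trans (errorTerm_le_succ hn)

theorem errorTerm_succ_add_sub_clog_le (hn : 1 ≤ n) :
    errorTerm (n + 1) + 2 ^ Nat.clog 2 (n + 1) / (n + 1 : ℕ) - Nat.clog 2 (n + 1) ≤
      errorTerm n + 2 ^ Nat.clog 2 n / n - Nat.clog 2 n := by
  have hn' : (0 : ℝ) < n := by exact_mod_cast hn
  have hstep : errorTerm (n + 1) - errorTerm n ≤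
      2 ^ Nat.clog 2 (n + 1) * ((n : ℝ)⁻¹ - (n + 1 : ℝ)⁻¹) := by
    rw [errorTerm_succ_sub hn]
    gcongr
    linarith [log_add_one_sub_log_le_inv hn']
  have := two_pow_clog_succ_div_sub_clog_succ n
  push_cast
  rw [mul_sub, ← div_eq_mul_inv, ← div_eq_mul_inv] at hstep
  linarith

theorem errorTerm_add_sub_clog_le (hn : 1 ≤ n) :
    errorTerm n + 2 ^ Nat.clog 2 n / n - Nat.clog 2 n ≤ 2 * log 2 + 1 := by
  induction n, hn using Nat.le_induction with
  | base => simp [errorTerm_one]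
  | succ n hn ih => exact (errorTerm_succ_add_sub_clog_le hn).trans ih

theorem errorTerm_le (hn : 1 ≤ n) : errorTerm n ≤ 2 * log 2 + 1 + Nat.clog 2 n := by
  have : (0 : ℝ) ≤ 2 ^ Nat.clog 2 n / n := by positivity
  linarith [errorTerm_add_sub_clog_le hn]

theorem sum_sub_mainTerm_eq_errorTerm (hn : 1 ≤ n) :
    (∑ i ∈ Icc 1 n, ((Nat.clog 2 i : ℝ) + 1 - (2 : ℝ) ^ (Nat.clog 2 i) / (i : ℝ)))
        - ((n : ℝ) * logb 2 n
            + (1 - logb 2 ((n : ℝ) / 2 ^ (Nat.clog 2 n))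
                - (1 + log (4 * ((n : ℝ) / 2 ^ (Nat.clog 2 n))))
                    / ((n : ℝ) / 2 ^ (Nat.clog 2 n))) * (n : ℝ)) = errorTerm n := by
  have hn' : (0 : ℝ) < n := by exact_mod_cast hn
  rw [sum_sub_distrib, sum_add_distrib, sum_Icc_clog_two, sum_const, Nat.card_Icc,
    logb_div hn'.ne' (by positivity), logb_pow, logb_self_eq_one one_lt_two, ← mul_div_assoc,
    errorTerm]
  field_simp
  push_cast
  ring

end BinaryInsertion

/-- the average complexity of BinaryInsertion sort equals
`n·log₂ n + (1 - log₂ p_n - (1 + ln(4p_n))/p_n)·n` up to `O(log n)`,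
where `p_n = n/2^⌈log₂ n⌉` with `⌈log₂ ·⌉ = Nat.clog 2`. -/
theorem binaryInsertion_average_complexity : ∃ C : ℝ, 0 < C ∧
    ∀ n : ℕ, 2 ≤ n →
      |(∑ i ∈ Finset.Icc 1 n,
          ((Nat.clog 2 i : ℝ) + 1 - (2 : ℝ) ^ (Nat.clog 2 i) / (i : ℝ)))
        - ((n : ℝ) * Real.logb 2 n
            + (1 - Real.logb 2 ((n : ℝ) / 2 ^ (Nat.clog 2 n))
                - (1 + Real.log (4 * ((n : ℝ) / 2 ^ (Nat.clog 2 n))))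
                    / ((n : ℝ) / 2 ^ (Nat.clog 2 n))) * (n : ℝ))|
      ≤ C * Real.logb 2 n := by
  refine ⟨5, by norm_num, fun n hn => ?_⟩
  rw [BinaryInsertion.sum_sub_mainTerm_eq_errorTerm (by omega),
    abs_of_nonneg (BinaryInsertion.errorTerm_nonneg (by omega))]
  have hlogb : 1 ≤ logb 2 n := by
    rw [le_logb_iff_rpow_le one_lt_two (by positivity), rpow_one]
    exact_mod_cast hn
  have hclog : (Nat.clog 2 n : ℝ) ≤ logb 2 n + 1 := by
    exact_mod_cast Nat.clog_le_logb_add_one one_lt_two (by omega)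
  linarith [BinaryInsertion.errorTerm_le (n := n) (by omega), log_two_lt_d9]
end

section
/- For every real p with 1/2 < p ≤ 1 and every positive integer r: if 1/2 < p ≤ (1+√2)/4 then ⌊r/2 − log₂(p(√2−1))⌋ = ⌊r/2⌋ + 2; if (1+√2)/4 < p ≤ (2+√2)/4 then ⌊r/2 − log₂(p(√2−1))⌋ = ⌈r/2⌉ + 1; and if (2+√2)/4 < p ≤ 1 then ⌊r/2 − log₂(p(√2−1))⌋ = ⌊r/2⌋ + 1. -/
open Real Set

/-! With `t = -log₂ (p (√2 - 1))`, the range `1/2 < p ≤ 1` gives `1 ≤ t < 5/2`, and the two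
thresholds `(1 + √2)/4` and `(2 + √2)/4` on `p` are exactly `t = 2` and `t = 3/2`. Adding
`t ∈ [m, m + 1/2)` to `n/2` raises its floor by `m`, whereas `t ∈ [m + 1/2, m + 1)` also carries
the half of an odd `n` over, giving `⌈n/2⌉ + m`. -/

theorem Int.exists_half_eq_or_eq_add_half {α : Type*} [Field α] [CharZero α] (n : ℤ) :
    ∃ k : ℤ, (n : α) / 2 = k ∨ (n : α) / 2 = k + 1 / 2 := by
  obtain ⟨k, rfl | rfl⟩ := n.even_or_odd'
  · exact ⟨k, .inl (by push_cast; ring)⟩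
  · exact ⟨k, .inr (by push_cast; ring)⟩

section HalfFloor

variable {α : Type*} [Field α] [LinearOrder α] [IsStrictOrderedRing α] [FloorRing α]

theorem Int.floor_half_add_eq_floor_half_add (n m : ℤ) {t : α}
    (ht : t ∈ Ico (m : α) (m + 1 / 2)) :
    ⌊(n : α) / 2 + t⌋ = ⌊(n : α) / 2⌋ + m := by
  obtain ⟨k, hk | hk⟩ := Int.exists_half_eq_or_eq_add_half (α := α) n <;> rw [hk] <;>
    obtain ⟨ht₁, ht₂⟩ := ht
  · rw [Int.floor_intCast, Int.floor_eq_iff]; push_cast; constructor <;> linarith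
  · have : ⌊(k : α) + 1 / 2⌋ = k := by
      rw [Int.floor_eq_iff]; constructor <;> linarith
    rw [this, Int.floor_eq_iff]; push_cast; constructor <;> linarith

theorem Int.floor_half_add_eq_ceil_half_add (n m : ℤ) {t : α}
    (ht : t ∈ Ico ((m : α) + 1 / 2) (m + 1)) :
    ⌊(n : α) / 2 + t⌋ = ⌈(n : α) / 2⌉ + m := by
  obtain ⟨k, hk | hk⟩ := Int.exists_half_eq_or_eq_add_half (α := α) n <;> rw [hk] <;>
    obtain ⟨ht₁, ht₂⟩ := ht
  · rw [Int.ceil_intCast, Int.floor_eq_iff]; push_cast; constructor <;> linarith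
  · have : ⌈(k : α) + 1 / 2⌉ = k + 1 := by
      rw [Int.ceil_eq_iff]; push_cast; constructor <;> linarith
    rw [this, Int.floor_eq_iff]; push_cast; constructor <;> linarith

end HalfFloor

theorem Real.le_neg_logb_two_iff {x : ℝ} (hx : 0 < x) (a : ℝ) :
    a ≤ -logb 2 x ↔ x ≤ 2 ^ (-a) := by
  rw [le_neg, logb_le_iff_le_rpow one_lt_two hx]

theorem Real.two_rpow_neg_three_halves : (2 : ℝ) ^ (-(3 / 2) : ℝ) = √2 / 4 := by
  rw [show (-(3 / 2) : ℝ) = 1 / 2 + (-2 : ℤ) by norm_num, rpow_add two_pos, ← sqrt_eq_rpow,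
    rpow_intCast]
  norm_num; ring

theorem Real.two_rpow_neg_five_halves : (2 : ℝ) ^ (-(5 / 2) : ℝ) = √2 / 8 := by
  rw [show (-(5 / 2) : ℝ) = 1 / 2 + (-3 : ℤ) by norm_num, rpow_add two_pos, ← sqrt_eq_rpow,
    rpow_intCast]
  norm_num; ring

theorem mul_sqrt_two_sub_one_le_iff (p c : ℝ) :
    p * (√2 - 1) ≤ c ↔ p ≤ c * (√2 + 1) := by
  have hpos : 0 < √2 - 1 := by simp [sub_pos, lt_sqrt]
  have hdiv : c / (√2 - 1) = c * (√2 + 1) := by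
    rw [div_eq_iff hpos.ne']
    linear_combination (-c) * sq_sqrt (zero_le_two : (0 : ℝ) ≤ 2)
  rw [← le_div_iff₀ hpos, hdiv]

theorem c_r_evaluation_general (p : ℝ) (hp1 : 1/2 < p) (hp2 : p ≤ 1) (r : ℕ) :
    (p ≤ (1 + Real.sqrt 2)/4 →
      ⌊(r : ℝ)/2 - Real.logb 2 (p * (Real.sqrt 2 - 1))⌋ = ⌊(r : ℝ)/2⌋ + 2) ∧
    ((1 + Real.sqrt 2)/4 < p → p ≤ (2 + Real.sqrt 2)/4 →
      ⌊(r : ℝ)/2 - Real.logb 2 (p * (Real.sqrt 2 - 1))⌋ = ⌈(r : ℝ)/2⌉ + 1) ∧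
    ((2 + Real.sqrt 2)/4 < p →
      ⌊(r : ℝ)/2 - Real.logb 2 (p * (Real.sqrt 2 - 1))⌋ = ⌊(r : ℝ)/2⌋ + 1) := by
  have hs : √2 * √2 = 2 := mul_self_sqrt zero_le_two
  have hs_gt : 1 < √2 := by simp [lt_sqrt]
  have hs_lt : √2 < 3 / 2 := by rw [sqrt_lt' (by norm_num)]; norm_num
  have hx : 0 < p * (√2 - 1) := mul_pos (by linarith) (by linarith)
  rw [sub_eq_add_neg ((r : ℝ) / 2)]
  set t := -logb 2 (p * (√2 - 1))
  have ht₁ : 1 ≤ t := by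
    rw [le_neg_logb_two_iff hx, rpow_neg_one, mul_sqrt_two_sub_one_le_iff]; linarith
  have ht₂ : 2 ≤ t ↔ p ≤ (1 + √2) / 4 := by
    rw [le_neg_logb_two_iff hx, rpow_neg zero_le_two, rpow_two, mul_sqrt_two_sub_one_le_iff]
    ring_nf
  have ht₃ : 3 / 2 ≤ t ↔ p ≤ (2 + √2) / 4 := by
    rw [le_neg_logb_two_iff hx, two_rpow_neg_three_halves, mul_sqrt_two_sub_one_le_iff,
      show √2 / 4 * (√2 + 1) = (2 + √2) / 4 by linear_combination hs / 4]
  have ht₅ : t < 5 / 2 := by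
    rw [← not_le, le_neg_logb_two_iff hx, two_rpow_neg_five_halves,
      mul_sqrt_two_sub_one_le_iff]
    nlinarith
  clear_value t
  rw [← Int.cast_natCast (R := ℝ) r]
  refine ⟨fun h => ?_, fun h h' => ?_, fun h => ?_⟩
  · exact Int.floor_half_add_eq_floor_half_add r 2
      ⟨by exact_mod_cast ht₂.2 h, by push_cast; linarith⟩
  · exact Int.floor_half_add_eq_ceil_half_add r 1
      ⟨by push_cast; linarith [ht₃.2 h'],
        by push_cast; linarith [not_le.1 (mt ht₂.1 h.not_ge)]⟩
  · exact Int.floor_half_add_eq_floor_half_add r 1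
      ⟨by exact_mod_cast ht₁, by push_cast; linarith [not_le.1 (mt ht₃.1 h.not_ge)]⟩

/-- evaluation of `c_r(p) = ⌊r/2 - log₂(p(√2-1))⌋` on the three
subintervals of `(1/2, 1]`. -/
theorem c_r_evaluation (p : ℝ) (hp1 : 1/2 < p) (hp2 : p ≤ 1) (r : ℕ) (hr : 1 ≤ r) :
    (p ≤ (1 + Real.sqrt 2)/4 →
      ⌊(r : ℝ)/2 - Real.logb 2 (p * (Real.sqrt 2 - 1))⌋ = ⌊(r : ℝ)/2⌋ + 2) ∧
    ((1 + Real.sqrt 2)/4 < p → p ≤ (2 + Real.sqrt 2)/4 →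
      ⌊(r : ℝ)/2 - Real.logb 2 (p * (Real.sqrt 2 - 1))⌋ = ⌈(r : ℝ)/2⌉ + 1) ∧
    ((2 + Real.sqrt 2)/4 < p →
      ⌊(r : ℝ)/2 - Real.logb 2 (p * (Real.sqrt 2 - 1))⌋ = ⌊(r : ℝ)/2⌋ + 1) :=
  c_r_evaluation_general p hp1 hp2 r
end

section
/- Let i ≥ 6 be an even integer, let m = ⌈log₂ i⌉, and assume 2^{m−1} < i ≤ 3·2^{m−2} (so m ≥ 3). Set i' = i/2 + 2^{m−3}. Then i' is an integer, ⌈log₂ i'⌉ = m − 1, and i'/2^{m−1} = i/2^{m} + 1/4. -/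
/-! Writing `m = k + 3` and `i = 2j`, the hypotheses read `2^(k+1) < j ≤ 3·2^k`, so
`i' = j + 2^k` lies in `(2^(k+1), 2^(k+2)]` and has `⌈log₂ i'⌉ = k + 2`. The bound `m ≥ 3`
comes from `6 ≤ i ≤ 3·2^(m-2)`; the ratio identity is plain algebra. -/

theorem Nat.clog_eq_succ_of_pow_lt_of_le {b n x : ℕ} (hb : 1 < b) (hlo : b ^ n < x)
    (hhi : x ≤ b ^ (n + 1)) : Nat.clog b x = n + 1 :=
  le_antisymm ((Nat.clog_le_iff_le_pow hb).mpr hhi) ((Nat.lt_clog_iff_pow_lt hb).mpr hlo)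

theorem three_le_of_six_le_three_mul_two_pow {m : ℕ} (h : 6 ≤ 3 * 2 ^ (m - 2)) : 3 ≤ m := by
  have : 2 ^ 1 ≤ 2 ^ (m - 2) := by omega
  have := (Nat.pow_le_pow_iff_right one_lt_two).mp this
  omega

theorem add_two_pow_mem_Ioc {j k : ℕ} (hlo : 2 ^ (k + 2) < 2 * j) (hhi : 2 * j ≤ 3 * 2 ^ (k + 1)) :
    2 ^ (k + 1) < j + 2 ^ k ∧ j + 2 ^ k ≤ 2 ^ (k + 2) := by
  have h1 : 2 ^ (k + 1) = 2 * 2 ^ k := Nat.pow_succ'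
  have h2 : 2 ^ (k + 2) = 4 * 2 ^ k := by ring
  omega

theorem add_two_pow_div_eq (j k : ℕ) :
    ((j : ℝ) + 2 ^ k) / 2 ^ (k + 2) = 2 * j / 2 ^ (k + 3) + 1 / 4 := by
  field_simp
  ring

theorem twoMergeStar_residual_instance_general (i : ℕ) (hi : 6 ≤ i) (heven : Even i)
    (m : ℕ)
    (hlow : 2 ^ (m - 1) < i) (hhigh : i ≤ 3 * 2 ^ (m - 2)) :
    3 ≤ m ∧
    ∃ i' : ℕ, (i' : ℝ) = (i : ℝ)/2 + 2 ^ (m - 3) ∧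
      Nat.clog 2 i' = m - 1 ∧
      (i' : ℝ) / 2 ^ (m - 1) = (i : ℝ) / 2 ^ m + 1/4 := by
  have hm : 3 ≤ m := three_le_of_six_le_three_mul_two_pow (hi.trans hhigh)
  obtain ⟨k, rfl⟩ : ∃ k, m = k + 3 := ⟨m - 3, by omega⟩
  obtain ⟨j, rfl⟩ := heven.two_dvd
  simp only [show k + 3 - 1 = k + 2 by omega, show k + 3 - 2 = k + 1 by omega,
    Nat.add_sub_cancel] at hlow hhigh ⊢
  obtain ⟨hj_lo, hj_hi⟩ := add_two_pow_mem_Ioc hlow hhigh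
  refine ⟨hm, j + 2 ^ k, by push_cast; ring, ?_, ?_⟩
  · exact Nat.clog_eq_succ_of_pow_lt_of_le one_lt_two hj_lo hj_hi
  · push_cast
    exact add_two_pow_div_eq j k

/-- for even `i ≥ 6` with `m = ⌈log₂ i⌉` (i.e. `Nat.clog 2 i`) and
`2^{m-1} < i ≤ 3·2^{m-2}`, we have `m ≥ 3`, and `i' = i/2 + 2^{m-3}` is an
integer with `⌈log₂ i'⌉ = m - 1` and `i'/2^{m-1} = i/2^m + 1/4`. -/
theorem twoMergeStar_residual_instance (i : ℕ) (hi : 6 ≤ i) (heven : Even i)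
    (m : ℕ) (hm : m = Nat.clog 2 i)
    (hlow : 2 ^ (m - 1) < i) (hhigh : i ≤ 3 * 2 ^ (m - 2)) :
    3 ≤ m ∧
    ∃ i' : ℕ, (i' : ℝ) = (i : ℝ)/2 + 2 ^ (m - 3) ∧
      Nat.clog 2 i' = m - 1 ∧
      (i' : ℝ) / 2 ^ (m - 1) = (i : ℝ) / 2 ^ m + 1/4 :=
  twoMergeStar_residual_instance_general i hi heven m hlow hhigh
end

section
/- Let m ≥ 3 and β be integers with 1 ≤ β ≤ 2^{m−2}, let i = 3·2^{m−2} + β, and let k be an integer with 1 ≤ k ≤ m−2. Then ⌈i − i/2^{k}⌉ − ⌈i − i/2^{k−1}⌉ − 2^{m−k−1} = 2^{m−k−2} + ⌊2β/2^{k}⌋ − ⌊β/2^{k}⌋. -/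
/-!
Since `i` is an integer, `⌈i - x⌉ = i - ⌊x⌋`, so the left-hand side is
`⌊i / 2^(k-1)⌋ - ⌊i / 2^k⌋ - 2^(m-k-1)`. Writing `m = k + a + 2`, the part `3·2^(m-2)` of `i`
is a multiple of `2^k`, contributing `3·2^a` to `⌊i / 2^k⌋` and `3·2^(a+1)` to
`⌊i / 2^(k-1)⌋`; what remains are the floors of `β / 2^k` and `β / 2^(k-1) = 2β / 2^k`.
-/

theorem Int.ceil_natCast_sub {R : Type*} [Ring R] [LinearOrder R] [IsOrderedRing R]
    [FloorRing R] (n : ℕ) (a : R) : ⌈(n : R) - a⌉ = n - ⌊a⌋ := by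
  rw [sub_eq_neg_add, Int.ceil_add_natCast, Int.ceil_neg, neg_add_eq_sub]

theorem Int.floor_add_intCast_mul_div {K : Type*} [Field K] [LinearOrder K]
    [IsStrictOrderedRing K] [FloorRing K] (x d : K) (hd : d ≠ 0) (n : ℤ) : ⌊(x + n * d) / d⌋ = ⌊x / d⌋ + n := by
  rw [add_div, mul_div_cancel_right₀ _ hd, Int.floor_add_intCast]

theorem twoMergeStar_block_width_general (m β : ℕ)
    (i : ℕ) (hi : i = 3 * 2 ^ (m - 2) + β)
    (k : ℕ) (hk1 : 1 ≤ k) (hk2 : k ≤ m - 2) :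
    (⌈(i : ℝ) - (i : ℝ) / 2 ^ k⌉ - ⌈(i : ℝ) - (i : ℝ) / 2 ^ (k - 1)⌉
        - 2 ^ (m - k - 1) : ℤ)
      = 2 ^ (m - k - 2) + ⌊2 * (β : ℝ) / 2 ^ k⌋ - ⌊(β : ℝ) / 2 ^ k⌋ := by
  obtain ⟨j, rfl⟩ : ∃ j, k = j + 1 := ⟨k - 1, by omega⟩
  obtain ⟨a, rfl⟩ : ∃ a, m = j + 1 + a + 2 := ⟨m - 2 - (j + 1), by omega⟩
  subst hi
  have hpow : (2 : ℝ) ^ (j + 1) ≠ 0 := by positivity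
  have hi_div : ((3 * 2 ^ (j + 1 + a + 2 - 2) + β : ℕ) : ℝ) / 2 ^ (j + 1)
      = (β + ((3 * 2 ^ a : ℤ) : ℝ) * 2 ^ (j + 1)) / 2 ^ (j + 1) := by
    push_cast; ring
  have hi_div_pred : ((3 * 2 ^ (j + 1 + a + 2 - 2) + β : ℕ) : ℝ) / 2 ^ (j + 1 - 1)
      = (2 * β + ((3 * 2 ^ (a + 1) : ℤ) : ℝ) * 2 ^ (j + 1)) / 2 ^ (j + 1) := by
    push_cast; field_simp; ring
  rw [Int.ceil_natCast_sub, Int.ceil_natCast_sub, hi_div, hi_div_pred,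
    Int.floor_add_intCast_mul_div _ _ hpow, Int.floor_add_intCast_mul_div _ _ hpow,
    show j + 1 + a + 2 - (j + 1) - 1 = a + 1 by omega,
    show j + 1 + a + 2 - (j + 1) - 2 = a by omega]
  ring

/-- exact identity for the block width `w_{2k}` in the analysis of
2Merge* when `p_i ∈ (3/4, 1]`, with `i = 3·2^{m-2} + β`. -/
theorem twoMergeStar_block_width (m β : ℕ) (hm : 3 ≤ m)
    (hβ1 : 1 ≤ β) (hβ2 : β ≤ 2 ^ (m - 2))
    (i : ℕ) (hi : i = 3 * 2 ^ (m - 2) + β)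
    (k : ℕ) (hk1 : 1 ≤ k) (hk2 : k ≤ m - 2) :
    (⌈(i : ℝ) - (i : ℝ) / 2 ^ k⌉ - ⌈(i : ℝ) - (i : ℝ) / 2 ^ (k - 1)⌉
        - 2 ^ (m - k - 1) : ℤ)
      = 2 ^ (m - k - 2) + ⌊2 * (β : ℝ) / 2 ^ k⌋ - ⌊(β : ℝ) / 2 ^ k⌋ :=
  twoMergeStar_block_width_general m β i hi k hk1 hk2
end
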